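/- arXiv:2004.05866 — 7 statements merged into one kernel-verified Lean document; each statement's English description precedes it below -/
import Mathlib

section
/- Let d ∈ ℕ, n ∈ ℤ^d and z ∈ ℂ with |2d − z| > 2d (in particular z ∉ [0,4d]). For α ∈ ℕ₀^d write |α| := α₁ + ⋯ + α_d. Then the family a_α := (2|α| + |n|)! / (α₁!⋯α_d! · (α₁+|n₁|)!⋯(α_d+|n_d|)!) · (2d − z)^{−2|α|−|n|−1}, indexed by α ∈ ℕ₀^d, is summable, and Σ_{α ∈ ℕ₀^d} a_α = G(z,n). -/
/-!
With `w = 2d - z`, the hypothesis `2d < |w|` makes `e^{i n·θ} / (w - 2 ∑ⱼ cos θⱼ)` the sum of the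
multinomial geometric series `∑_β (|β| choose β) ∏ⱼ (2 cos θⱼ)^{βⱼ} w^{-|β|-1}`, dominated uniformly in
`θ` by the same series with `2 cos θⱼ` replaced by `2`; so it can be integrated termwise. Each term
factorises over the coordinates, and `∫_{-π}^{π} e^{imt} (2 cos t)^b dt` is `2π (b choose a)` when
`b = 2a + |m|` and `0` otherwise. The surviving multi-indices are `βⱼ = 2αⱼ + |nⱼ|`, and for them
`(|β| choose β) ∏ⱼ (βⱼ choose αⱼ) = |β|! / ∏ⱼ αⱼ! (αⱼ + |nⱼ|)!`.
-/

open MeasureTheory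

/-- The lattice resolvent kernel `G(z,n)` in dimension `d`:
`G(z,n) = (2π)^{-d} ∫_{[-π,π]^d} e^{i n·θ} / (2d - 2cos θ₁ - ⋯ - 2cos θ_d - z) dθ`. -/
noncomputable def G (d : ℕ) (z : ℂ) (n : Fin d → ℤ) : ℂ :=
  (2 * (Real.pi : ℂ)) ^ (-(d : ℤ)) *
    ∫ θ : Fin d → ℝ in Set.univ.pi fun _ => Set.Icc (-Real.pi) Real.pi,
      Complex.exp (Complex.I * ∑ j, (n j : ℂ) * (θ j : ℂ)) /
        (2 * d - 2 * ∑ j, (Real.cos (θ j) : ℂ) - z)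

open Finset Complex
open scoped Real Nat

section MultinomialSeries

variable {ι : Type*} [Fintype ι]

def sigmaPiAntidiagEquiv [DecidableEq ι] : (Σ k : ℕ, piAntidiag (univ : Finset ι) k) ≃ (ι → ℕ) :=
  (Equiv.sigmaCongrRight fun _ => Equiv.subtypeEquivRight fun _ => by simp).trans
    (Equiv.sigmaFiberEquiv fun β : ι → ℕ => ∑ j, β j)

theorem HasSum.sum_piAntidiag [DecidableEq ι] {α : Type*} [AddCommMonoid α] [TopologicalSpace α]
    [ContinuousAdd α] [RegularSpace α] {f : (ι → ℕ) → α} {a : α} (hf : HasSum f a) :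
    HasSum (fun k => ∑ β ∈ piAntidiag univ k, f β) a :=
  (sigmaPiAntidiagEquiv.hasSum_iff.mpr hf).sigma fun k => (piAntidiag univ k).hasSum f

theorem summable_of_summable_sum_piAntidiag [DecidableEq ι] {f : (ι → ℕ) → ℝ} (hf : 0 ≤ f)
    (h : Summable fun k => ∑ β ∈ piAntidiag univ k, f β) : Summable f := by
  refine sigmaPiAntidiagEquiv.summable_iff.mp
    ((summable_sigma_of_nonneg (f := f ∘ sigmaPiAntidiagEquiv) fun _ => hf _).mpr
      ⟨fun k => (hasSum_fintype _).summable, ?_⟩)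
  exact h.congr fun k => ((piAntidiag univ k).tsum_subtype f).symm

def multinomialGeomTerm {R : Type*} [CommSemiring R] (x : ι → R) (c : R) (β : ι → ℕ) : R :=
  Nat.multinomial univ β * (∏ j, x j ^ β j) * c ^ (∑ j, β j + 1)

theorem sum_piAntidiag_multinomialGeomTerm [DecidableEq ι] {R : Type*} [CommSemiring R]
    (x : ι → R) (c : R) (k : ℕ) :
    ∑ β ∈ piAntidiag univ k, multinomialGeomTerm x c β = (∑ j, x j) ^ k * c ^ (k + 1) := by
  rw [sum_pow_eq_sum_piAntidiag, sum_mul]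
  refine sum_congr rfl fun β hβ => ?_
  simp only [multinomialGeomTerm, (mem_piAntidiag.mp hβ).1]

theorem multinomialGeomTerm_nonneg {x : ι → ℝ} {c : ℝ} (hx : 0 ≤ x) (hc : 0 ≤ c) (β : ι → ℕ) :
    0 ≤ multinomialGeomTerm x c β := by
  have := prod_nonneg fun j (_ : j ∈ univ) => pow_nonneg (hx j) (β j)
  unfold multinomialGeomTerm
  positivity

theorem norm_multinomialGeomTerm {𝕜 : Type*} [RCLike 𝕜] (x : ι → 𝕜) (c : 𝕜) (β : ι → ℕ) :
    ‖multinomialGeomTerm x c β‖ = multinomialGeomTerm (fun j => ‖x j‖) ‖c‖ β := by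
  simp [multinomialGeomTerm, norm_prod]

theorem summable_multinomialGeomTerm_of_nonneg {x : ι → ℝ} {c : ℝ} (hx : 0 ≤ x) (hc : 0 ≤ c)
    (h : c * ∑ j, x j < 1) : Summable (multinomialGeomTerm x c) := by
  classical
  refine summable_of_summable_sum_piAntidiag (multinomialGeomTerm_nonneg hx hc) ?_
  simp_rw [sum_piAntidiag_multinomialGeomTerm, pow_succ, ← mul_assoc, ← mul_pow]
  have := sum_nonneg fun j (_ : j ∈ univ) => hx j
  exact (summable_geometric_of_lt_one (by positivity) (by rwa [mul_comm])).mul_right c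

theorem hasSum_multinomialGeomTerm {𝕜 : Type*} [RCLike 𝕜] {x : ι → 𝕜} {w : 𝕜}
    (h : ∑ j, ‖x j‖ < ‖w‖) : HasSum (multinomialGeomTerm x w⁻¹) (w - ∑ j, x j)⁻¹ := by
  classical
  have hw : 0 < ‖w‖ := (sum_nonneg fun j _ => norm_nonneg (x j)).trans_lt h
  have hsum : Summable (multinomialGeomTerm x w⁻¹) := by
    refine .of_norm ?_
    simp_rw [norm_multinomialGeomTerm]
    refine summable_multinomialGeomTerm_of_nonneg (fun j => norm_nonneg _) (norm_nonneg _) ?_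
    rwa [norm_inv, inv_mul_lt_iff₀ hw, mul_one]
  have hratio : ‖(∑ j, x j) / w‖ < 1 := by
    rw [norm_div, div_lt_one hw]
    exact (norm_sum_le _ _).trans_lt h
  have hgeom : HasSum (fun k : ℕ => (∑ j, x j) ^ k * w⁻¹ ^ (k + 1)) (w - ∑ j, x j)⁻¹ := by
    have h := (hasSum_geometric_of_norm_lt_one hratio).mul_right w⁻¹
    rw [show (1 - (∑ j, x j) / w)⁻¹ * w⁻¹ = (w - ∑ j, x j)⁻¹ by
      field_simp [norm_pos_iff.mp hw]] at h
    exact h.congr_fun fun k => by rw [div_pow, pow_succ, inv_pow]; ring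
  obtain ⟨a, ha⟩ := hsum
  rwa [hgeom.unique (by simpa only [sum_piAntidiag_multinomialGeomTerm] using ha.sum_piAntidiag)]

end MultinomialSeries

theorem integral_exp_I_int_mul (t : ℤ) :
    ∫ θ : ℝ in Set.Icc (-π) π, exp (I * t * θ) = if t = 0 then (2 * π : ℂ) else 0 := by
  rw [integral_Icc_eq_integral_Ioc, ← intervalIntegral.integral_of_le (by linarith [Real.pi_pos])]
  split_ifs with ht
  · simp [ht, two_mul]
  · have hc : I * t ≠ 0 := by simp [ht]
    rw [integral_exp_mul_complex hc, div_eq_zero_iff, sub_eq_zero]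
    left
    -- `exp (I t θ)` is `2π`-periodic
    rw [show I * t * ((-π : ℝ) : ℂ) = I * t * π - t * (2 * π * I) by push_cast; ring,
      exp_sub, exp_int_mul_two_pi_mul_I, div_one]

theorem exp_mul_two_cos_pow (m : ℤ) (b : ℕ) (θ : ℝ) :
    exp (I * m * θ) * (2 * Real.cos θ) ^ b =
      ∑ j ∈ range (b + 1), (b.choose j : ℂ) * exp (I * (m + 2 * j - b : ℤ) * θ) := by
  have h2cos : 2 * (Real.cos θ : ℂ) = exp (θ * I) + exp (-θ * I) := by
    rw [ofReal_cos, cos]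
    ring
  rw [h2cos, add_pow, mul_sum]
  refine sum_congr rfl fun j hj => ?_
  have hj : j ≤ b := Nat.lt_succ_iff.mp (mem_range.mp hj)
  rw [← exp_nat_mul, ← exp_nat_mul, ← exp_add, mul_comm _ (b.choose j : ℂ), mul_left_comm,
    ← exp_add]
  congr 2
  push_cast [Nat.cast_sub hj]
  ring

theorem integral_exp_mul_two_cos_pow (m : ℤ) (b : ℕ) :
    ∫ θ : ℝ in Set.Icc (-π) π, exp (I * m * θ) * (2 * Real.cos θ) ^ b =
      ∑ j ∈ range (b + 1), (b.choose j : ℂ) * if m + 2 * j - b = 0 then (2 * π : ℂ) else 0 := by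
  simp_rw [exp_mul_two_cos_pow]
  rw [integral_finsetSum _ fun j _ => (Continuous.integrableOn_Icc (by fun_prop)).integrable]
  simp_rw [integral_const_mul, integral_exp_I_int_mul]

theorem integral_exp_mul_two_cos_pow_two_mul_add_natAbs (m : ℤ) (a : ℕ) :
    ∫ θ : ℝ in Set.Icc (-π) π, exp (I * m * θ) * (2 * Real.cos θ) ^ (2 * a + m.natAbs) =
      (2 * a + m.natAbs).choose a * (2 * π) := by
  rw [integral_exp_mul_two_cos_pow]
  -- the resonant frequency is `j = a` for `m ≥ 0` and `j = a + |m|` for `m ≤ 0`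
  rcases Int.natAbs_eq m with hm | hm
  · rw [sum_eq_single_of_mem a (by simp; omega) fun j _ hj => by rw [if_neg (by omega), mul_zero],
      if_pos (by omega)]
  · rw [sum_eq_single_of_mem (a + m.natAbs) (by simp; omega)
      fun j _ hj => by rw [if_neg (by omega), mul_zero], if_pos (by omega),
      show 2 * a + m.natAbs = (a + m.natAbs) + a by ring, Nat.choose_symm_add]

theorem integral_exp_mul_two_cos_pow_eq_zero {m : ℤ} {b : ℕ} (hb : ∀ a : ℕ, b ≠ 2 * a + m.natAbs) :
    ∫ θ : ℝ in Set.Icc (-π) π, exp (I * m * θ) * (2 * Real.cos θ) ^ b = 0 := by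
  rw [integral_exp_mul_two_cos_pow]
  refine sum_eq_zero fun j hj => ?_
  rw [if_neg, mul_zero]
  intro hres
  have := mem_range.mp hj
  rcases le_total (2 * j) b with h | h
  · exact hb j (by omega)
  · exact hb (b - j) (by omega)

theorem Nat.multinomial_add_mul_prod_choose {ι : Type*} (s : Finset ι) (a b : ι → ℕ) :
    multinomial s (fun i => a i + b i) * (∏ i ∈ s, (a i + b i).choose (b i)) *
      ((∏ i ∈ s, (a i)!) * ∏ i ∈ s, (b i)!) = (∑ i ∈ s, (a i + b i))! := by
  rw [← multinomial_spec, mul_comm _ (multinomial _ _), mul_assoc, ← prod_mul_distrib,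
    ← prod_mul_distrib]
  simp only [← mul_assoc, add_choose_mul_factorial_mul_factorial]

section Torus

variable {ι : Type*} [Fintype ι]

theorem setIntegral_univ_pi_prod {𝕜 : Type*} [RCLike 𝕜] {E : ι → Type*}
    {mE : ∀ i, MeasurableSpace (E i)} {μ : (i : ι) → Measure (E i)} [∀ i, SigmaFinite (μ i)]
    (s : (i : ι) → Set (E i)) (f : (i : ι) → E i → 𝕜) :
    ∫ x in Set.univ.pi s, ∏ i, f i (x i) ∂Measure.pi μ = ∏ i, ∫ x in s i, f i x ∂μ i := by
  rw [Measure.restrict_pi_pi, integral_fintype_prod_eq_prod]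

theorem norm_two_mul_cos_le (t : ℝ) : ‖2 * (Real.cos t : ℂ)‖ ≤ 2 := by
  rw [norm_mul, Complex.norm_ofNat, Complex.norm_real, Real.norm_eq_abs]
  linarith [Real.abs_cos_le_one t]

/-- The terms of the integrand of `G` (with `w = 2d - z`) expanded in powers of the `2 cos θⱼ / w`. -/
noncomputable def resolventTerm (n : ι → ℤ) (w : ℂ) (β : ι → ℕ) (θ : ι → ℝ) : ℂ :=
  exp (I * ∑ j, (n j : ℂ) * θ j) * multinomialGeomTerm (fun j => 2 * (Real.cos (θ j) : ℂ)) w⁻¹ β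

theorem hasSum_resolventTerm (n : ι → ℤ) {w : ℂ} (hw : 2 * Fintype.card ι < ‖w‖) (θ : ι → ℝ) :
    HasSum (fun β => resolventTerm n w β θ)
      (exp (I * ∑ j, (n j : ℂ) * θ j) / (w - 2 * ∑ j, (Real.cos (θ j) : ℂ))) := by
  have hx : ∑ j, ‖2 * (Real.cos (θ j) : ℂ)‖ < ‖w‖ :=
    calc _ ≤ ∑ _j : ι, (2 : ℝ) := sum_le_sum fun j _ => norm_two_mul_cos_le (θ j)
      _ = 2 * Fintype.card ι := by simp [mul_comm]
      _ < ‖w‖ := hw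
  have := (hasSum_multinomialGeomTerm hx).mul_left (exp (I * ∑ j, (n j : ℂ) * θ j))
  rwa [← mul_sum, ← div_eq_mul_inv] at this

theorem norm_resolventTerm_le (n : ι → ℤ) (w : ℂ) (β : ι → ℕ) (θ : ι → ℝ) :
    ‖resolventTerm n w β θ‖ ≤ multinomialGeomTerm (fun _ => (2 : ℝ)) ‖w‖⁻¹ β := by
  have hexp : ‖exp (I * ∑ j, (n j : ℂ) * θ j)‖ = 1 := by
    rw [norm_exp]
    simp
  rw [resolventTerm, norm_mul, hexp, one_mul, norm_multinomialGeomTerm, norm_inv]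
  unfold multinomialGeomTerm
  gcongr with j
  exact norm_two_mul_cos_le (θ j)

theorem continuous_resolventTerm (n : ι → ℤ) (w : ℂ) (β : ι → ℕ) :
    Continuous (resolventTerm n w β) := by
  unfold resolventTerm multinomialGeomTerm
  fun_prop

theorem hasSum_integral_resolventTerm (n : ι → ℤ) {w : ℂ} (hw : 2 * Fintype.card ι < ‖w‖) :
    HasSum (fun β => ∫ θ in Set.univ.pi fun _ => Set.Icc (-π) π, resolventTerm n w β θ)
      (∫ θ in Set.univ.pi fun _ => Set.Icc (-π) π,
        exp (I * ∑ j, (n j : ℂ) * θ j) / (w - 2 * ∑ j, (Real.cos (θ j) : ℂ))) := by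
  have : IsFiniteMeasure (volume.restrict (Set.univ.pi fun _ : ι => Set.Icc (-π) π)) :=
    isFiniteMeasure_restrict.mpr (isCompact_univ_pi fun _ => isCompact_Icc).measure_lt_top.ne
  have hw0 : 0 < ‖w‖ := lt_of_le_of_lt (by positivity) hw
  have hbound : Summable (multinomialGeomTerm (fun _ : ι => (2 : ℝ)) ‖w‖⁻¹) := by
    refine summable_multinomialGeomTerm_of_nonneg (fun _ => zero_le_two) (by positivity) ?_
    rwa [sum_const, card_univ, nsmul_eq_mul, inv_mul_lt_iff₀ hw0, mul_one, mul_comm]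
  exact hasSum_integral_of_dominated_convergence _
    (fun β => (continuous_resolventTerm n w β).aestronglyMeasurable)
    (fun β => .of_forall (norm_resolventTerm_le n w β)) (.of_forall fun _ => hbound)
    (integrable_const _) (.of_forall (hasSum_resolventTerm n hw))

theorem integral_resolventTerm (n : ι → ℤ) (w : ℂ) (β : ι → ℕ) :
    ∫ θ in Set.univ.pi fun _ => Set.Icc (-π) π, resolventTerm n w β θ =
      Nat.multinomial univ β * w⁻¹ ^ (∑ j, β j + 1) *
        ∏ j, ∫ t in Set.Icc (-π) π, exp (I * n j * t) * (2 * Real.cos t) ^ β j := by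
  have hsplit : resolventTerm n w β = fun θ => Nat.multinomial univ β * w⁻¹ ^ (∑ j, β j + 1) *
      ∏ j, exp (I * n j * θ j) * (2 * Real.cos (θ j)) ^ β j := by
    ext θ
    rw [resolventTerm, multinomialGeomTerm, prod_mul_distrib, mul_sum, exp_sum]
    simp_rw [mul_assoc]
    ring
  rw [hsplit, integral_const_mul]
  exact congrArg _ (setIntegral_univ_pi_prod (μ := fun _ => volume) _
    fun j (t : ℝ) => exp (I * n j * t) * (2 * Real.cos t) ^ β j)

theorem integral_resolventTerm_eq_zero (n : ι → ℤ) (w : ℂ) {β : ι → ℕ}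
    (hβ : ∀ α : ι → ℕ, β ≠ fun j => 2 * α j + (n j).natAbs) :
    ∫ θ in Set.univ.pi fun _ => Set.Icc (-π) π, resolventTerm n w β θ = 0 := by
  obtain ⟨j, hj⟩ : ∃ j, ∀ a : ℕ, β j ≠ 2 * a + (n j).natAbs := by
    by_contra! h
    choose α hα using h
    exact hβ α (funext hα)
  rw [integral_resolventTerm, prod_eq_zero (mem_univ j) (integral_exp_mul_two_cos_pow_eq_zero hj),
    mul_zero]

theorem integral_resolventTerm_two_mul_add_natAbs (n : ι → ℤ) (w : ℂ) (α : ι → ℕ) :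
    ∫ θ in Set.univ.pi fun _ => Set.Icc (-π) π,
        resolventTerm n w (fun j => 2 * α j + (n j).natAbs) θ =
      (2 * π) ^ Fintype.card ι *
        (((2 * (∑ j, α j) + ∑ j, (n j).natAbs).factorial : ℂ) /
          ((∏ j, ((α j).factorial : ℂ)) * ∏ j, ((α j + (n j).natAbs).factorial : ℂ)) *
          w ^ (-(2 * (∑ j, (α j : ℤ)) + (∑ j, ((n j).natAbs : ℤ)) + 1))) := by
  have hβ : ∀ j, 2 * α j + (n j).natAbs = α j + (n j).natAbs + α j := fun j => by ring
  have hfactor : ∀ j, ∫ t in Set.Icc (-π) π,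
      exp (I * n j * t) * (2 * Real.cos t) ^ (2 * α j + (n j).natAbs) =
        (α j + (n j).natAbs + α j).choose (α j) * (2 * π) := fun j => by
    rw [integral_exp_mul_two_cos_pow_two_mul_add_natAbs, hβ]
  have hpow : w ^ (-(2 * (∑ j, (α j : ℤ)) + (∑ j, ((n j).natAbs : ℤ)) + 1)) =
      w⁻¹ ^ (∑ j, (2 * α j + (n j).natAbs) + 1) := by
    rw [zpow_neg, ← inv_zpow, ← zpow_natCast]
    push_cast [sum_add_distrib, mul_sum]
    ring
  have hcomb := Nat.multinomial_add_mul_prod_choose univ (fun j => α j + (n j).natAbs) α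
  rw [show ∑ j, (α j + (n j).natAbs + α j) = 2 * ∑ j, α j + ∑ j, (n j).natAbs by
    rw [sum_add_distrib, sum_add_distrib]; ring] at hcomb
  rw [integral_resolventTerm, hpow]
  simp_rw [hfactor, prod_mul_distrib, prod_const, card_univ, hβ, ← hcomb]
  have hfact : ∀ m : ι → ℕ, ∏ j, ((m j)! : ℂ) ≠ 0 :=
    fun m => prod_ne_zero_iff.mpr fun j _ => Nat.cast_ne_zero.mpr (m j).factorial_ne_zero
  push_cast
  field_simp [hfact]
  ring

end Torus

theorem laurent_expansion_of_resolvent_general (d : ℕ) (n : Fin d → ℤ) (z : ℂ)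
    (hz : 2 * d < ‖(2 * d - z : ℂ)‖) :
    Summable (fun α : Fin d → ℕ =>
      ((2 * (∑ j, α j) + ∑ j, (n j).natAbs).factorial : ℂ) /
        ((∏ j, ((α j).factorial : ℂ)) * ∏ j, ((α j + (n j).natAbs).factorial : ℂ)) *
        (2 * d - z) ^ (-(2 * (∑ j, (α j : ℤ)) + (∑ j, ((n j).natAbs : ℤ)) + 1))) ∧
    ∑' α : Fin d → ℕ,
      ((2 * (∑ j, α j) + ∑ j, (n j).natAbs).factorial : ℂ) /
        ((∏ j, ((α j).factorial : ℂ)) * ∏ j, ((α j + (n j).natAbs).factorial : ℂ)) *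
        (2 * d - z) ^ (-(2 * (∑ j, (α j : ℤ)) + (∑ j, ((n j).natAbs : ℤ)) + 1))
      = G d z n := by
  have hinj : Function.Injective fun (α : Fin d → ℕ) j => 2 * α j + (n j).natAbs :=
    fun α α' h => funext fun j => by simpa using congrFun h j
  have hsum := (hinj.hasSum_iff fun β hβ => integral_resolventTerm_eq_zero n (2 * d - z)
    fun α h => hβ ⟨α, h.symm⟩).mpr (hasSum_integral_resolventTerm n (by simpa using hz))
  have h2π : (2 * π : ℂ) ^ (-(d : ℤ)) * (2 * π) ^ d = 1 := by
    rw [← zpow_natCast, ← zpow_add₀ (mul_ne_zero two_ne_zero (ofReal_ne_zero.mpr Real.pi_ne_zero)),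
      neg_add_cancel, zpow_zero]
  have hG : G d z n = (2 * π : ℂ) ^ (-(d : ℤ)) * ∫ θ in Set.univ.pi fun _ => Set.Icc (-π) π,
      exp (I * ∑ j, (n j : ℂ) * θ j) / (2 * d - z - 2 * ∑ j, (Real.cos (θ j) : ℂ)) := by
    simp only [G, sub_right_comm]
  have key := (hsum.mul_left ((2 * π : ℂ) ^ (-(d : ℤ)))).congr_fun fun α => by
    rw [Function.comp_apply, integral_resolventTerm_two_mul_add_natAbs, Fintype.card_fin,
      ← mul_assoc, h2π, one_mul]
  rw [← hG] at key
  exact ⟨key.summable, key.tsum_eq⟩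

/-- Laurent expansion of the resolvent of the discrete Laplacian for `|2d - z| > 2d`. -/
theorem laurent_expansion_of_resolvent (d : ℕ) (hd : 0 < d) (n : Fin d → ℤ) (z : ℂ)
    (hz : 2 * d < ‖(2 * d - z : ℂ)‖) :
    Summable (fun α : Fin d → ℕ =>
      ((2 * (∑ j, α j) + ∑ j, (n j).natAbs).factorial : ℂ) /
        ((∏ j, ((α j).factorial : ℂ)) * ∏ j, ((α j + (n j).natAbs).factorial : ℂ)) *
        (2 * d - z) ^ (-(2 * (∑ j, (α j : ℤ)) + (∑ j, ((n j).natAbs : ℤ)) + 1))) ∧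
    ∑' α : Fin d → ℕ,
      ((2 * (∑ j, α j) + ∑ j, (n j).natAbs).factorial : ℂ) /
        ((∏ j, ((α j).factorial : ℂ)) * ∏ j, ((α j + (n j).natAbs).factorial : ℂ)) *
        (2 * d - z) ^ (-(2 * (∑ j, (α j : ℤ)) + (∑ j, ((n j).natAbs : ℤ)) + 1))
      = G d z n :=
  laurent_expansion_of_resolvent_general d n z hz
end

section
/- Let d ∈ ℕ, n ∈ ℤ^d and z ∈ ℂ with Re z < 0. Then G(z,n) = ∫₀^∞ e^{−t(2d−z)} · Π_{j=1}^d I_{|n_j|}(2t) dt, where the integral over (0,∞) converges. -/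
open MeasureTheory

/-- The modified Bessel function of the first kind of nonnegative integer order:
`I_ν(x) = Σ_{k} (x/2)^(2k+ν) / (k! (k+ν)!)`. -/
noncomputable def besselI (ν : ℕ) (x : ℝ) : ℝ :=
  ∑' k : ℕ, (x / 2) ^ (2 * k + ν) / ((k.factorial : ℝ) * ((k + ν).factorial : ℝ))

/-!
Since `Re z < 0` and the symbol `2d - 2 ∑ cos θⱼ` is nonnegative,
`(2d - 2 ∑ cos θⱼ - z)⁻¹ = ∫₀^∞ e^{-t (2d - 2 ∑ cos θⱼ - z)} dt`, with an integrand dominated by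
`e^{t Re z}`, so Fubini lets us integrate over `θ` first. That integral factorizes over the
coordinates, and each factor is `∫_{-π}^{π} e^{imθ} e^{x cos θ} dθ = 2π I_{|m|}(x)`: expanding
`e^{x cos θ} = e^{(x/2) e^{iθ}} e^{(x/2) e^{-iθ}}` as a double power series, orthogonality of the
characters `e^{ikθ}` on `[-π, π]` keeps exactly the terms of the Bessel series.
-/

open Complex Set
open scoped Real Nat

lemma norm_cexp_I_mul_int_mul (l : ℤ) (θ : ℝ) : ‖cexp (I * l * θ)‖ = 1 := by
  rw [← ofReal_intCast, mul_assoc, ← ofReal_mul, norm_exp_I_mul_ofReal]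

lemma integral_Icc_cexp_I_mul_int (l : ℤ) :
    ∫ θ in Icc (-π) π, cexp (I * l * θ) = if l = 0 then (2 * π : ℂ) else 0 := by
  rw [integral_Icc_eq_integral_Ioc,
    ← intervalIntegral.integral_of_le (by linarith [Real.pi_pos])]
  split_ifs with hl
  · simp [hl]
    ring
  · have hc : I * l ≠ 0 := by simp [hl]
    rw [integral_exp_mul_complex hc]
    have hperiodic : cexp (I * l * π) = cexp (I * l * ↑(-π)) := by
      rw [show (I * l * π : ℂ) = I * l * ↑(-π) + l * (2 * π * I) by push_cast; ring,
        exp_add, exp_int_mul_two_pi_mul_I, mul_one]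
    rw [hperiodic, sub_self, zero_div]

lemma cexp_mul_cos_eq_tsum (x θ : ℝ) :
    cexp (x * Real.cos θ) = ∑' p : ℕ × ℕ,
      (x / 2 : ℂ) ^ p.1 / p.1 ! * ((x / 2 : ℂ) ^ p.2 / p.2 !) *
        cexp (I * ((p.1 - p.2 : ℤ) : ℂ) * θ) := by
  have hcos : (x * Real.cos θ : ℂ) = x / 2 * cexp (θ * I) + x / 2 * cexp (-(θ * I)) := by
    rw [ofReal_cos, Complex.cos]
    ring_nf
  have hexp (w : ℂ) : cexp w = ∑' k : ℕ, w ^ k / k ! := by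
    rw [exp_eq_exp_ℂ, NormedSpace.exp_eq_tsum_div]
  rw [hcos, exp_add, hexp (x / 2 * cexp (θ * I)), hexp (x / 2 * cexp (-(θ * I))),
    tsum_mul_tsum_of_summable_norm (NormedSpace.norm_expSeries_div_summable (𝔸 := ℂ) _)
      (NormedSpace.norm_expSeries_div_summable (𝔸 := ℂ) _)]
  congr 1 with p
  rw [mul_pow, mul_pow, ← exp_nat_mul, ← exp_nat_mul]
  have hchar : cexp (I * ((p.1 - p.2 : ℤ) : ℂ) * θ) =
      cexp (p.1 * (θ * I)) * cexp (p.2 * -(θ * I)) := by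
    rw [← exp_add]
    push_cast
    ring_nf
  rw [hchar]
  ring

lemma tsum_ite_sub_add_eq_zero {α : Type*} [AddCommMonoid α] [TopologicalSpace α] (m : ℤ)
    (f : ℕ × ℕ → α) :
    ∑' p : ℕ × ℕ, (if (p.1 - p.2 + m : ℤ) = 0 then f p else 0) =
      ∑' k : ℕ, f (k + (-m).toNat, k + m.toNat) := by
  have hinj : Function.Injective fun k : ℕ => (k + (-m).toNat, k + m.toNat) :=
    fun a b h => by simpa using congrArg Prod.fst h
  rw [← hinj.tsum_eq]
  · exact tsum_congr fun k => if_pos (by push_cast; omega)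
  · intro p hp
    have hp : (p.1 - p.2 + m : ℤ) = 0 := by
      by_contra h
      simp [h] at hp
    exact ⟨min p.1 p.2, by ext <;> simp <;> omega⟩

lemma pow_div_factorial_mul_pow_div_factorial_toNat (y : ℂ) (m : ℤ) (k : ℕ) :
    y ^ (k + (-m).toNat) / (k + (-m).toNat)! * (y ^ (k + m.toNat) / (k + m.toNat)!) =
      y ^ (2 * k + m.natAbs) / (k ! * (k + m.natAbs)!) := by
  obtain ⟨j, rfl | rfl⟩ := Int.eq_nat_or_neg m <;>
  · simp only [Int.toNat_neg_natCast, Int.toNat_natCast, neg_neg, Int.natAbs_neg,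
      Int.natAbs_natCast, add_zero]
    rw [div_mul_div_comm, ← pow_add]
    ring

lemma integral_Icc_cexp_I_mul_int_mul_cexp_mul_cos (m : ℤ) (x : ℝ) :
    ∫ θ in Icc (-π) π, cexp (I * m * θ) * cexp (x * Real.cos θ) =
      2 * π * besselI m.natAbs x := by
  set c : ℕ × ℕ → ℂ := fun p => (x / 2 : ℂ) ^ p.1 / p.1 ! * ((x / 2 : ℂ) ^ p.2 / p.2 !)
  set F : ℕ × ℕ → ℝ → ℂ := fun p θ => c p * cexp (I * ((p.1 - p.2 + m : ℤ) : ℂ) * θ)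
  have hF : ∀ θ : ℝ, cexp (I * m * θ) * cexp (x * Real.cos θ) = ∑' p, F p θ := fun θ => by
    rw [cexp_mul_cos_eq_tsum, ← tsum_mul_left]
    refine tsum_congr fun p => ?_
    simp only [F, c]
    rw [mul_left_comm, ← exp_add]
    push_cast
    ring_nf
  have hF_int : ∀ p, Integrable (F p) (volume.restrict (Icc (-π) π)) := fun p =>
    (by fun_prop : Continuous (F p)).integrableOn_Icc
  have hF_norm : ∀ p, ∫ θ in Icc (-π) π, ‖F p θ‖ = 2 * π * ‖c p‖ := fun p => by
    simp only [F, norm_mul, norm_cexp_I_mul_int_mul, mul_one, setIntegral_const,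
      Real.volume_real_Icc_of_le (by linarith [Real.pi_pos] : -π ≤ π), smul_eq_mul]
    ring
  have hF_sum : Summable fun p => ∫ θ in Icc (-π) π, ‖F p θ‖ := by
    simp_rw [hF_norm]
    exact ((NormedSpace.norm_expSeries_div_summable (𝔸 := ℂ) _).mul_norm
      (NormedSpace.norm_expSeries_div_summable (𝔸 := ℂ) _)).mul_left _
  simp_rw [hF]
  rw [← integral_tsum_of_summable_integral_norm hF_int hF_sum]
  simp_rw [F, integral_const_mul, integral_Icc_cexp_I_mul_int, mul_ite, mul_zero]
  rw [tsum_ite_sub_add_eq_zero]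
  simp_rw [c, pow_div_factorial_mul_pow_div_factorial_toNat]
  rw [besselI, ofReal_tsum, ← tsum_mul_left]
  refine tsum_congr fun k => ?_
  push_cast
  ring

lemma integral_Ioi_cexp_neg_mul {w : ℂ} (hw : 0 < w.re) :
    ∫ t in Ioi (0 : ℝ), cexp (-t * w) = w⁻¹ := by
  have hw' : (-w).re < 0 := by simpa using hw
  simp_rw [show ∀ t : ℝ, -(t : ℂ) * w = -w * t from fun t => by ring]
  rw [integral_exp_mul_complex_Ioi hw' 0]
  simp

lemma norm_cexp_neg_mul_sub_le {r t : ℝ} (hr : 0 ≤ r) (ht : 0 ≤ t) (z : ℂ) :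
    ‖cexp (-t * (r - z))‖ ≤ Real.exp (z.re * t) := by
  rw [norm_exp, Real.exp_le_exp]
  simp only [mul_re, neg_re, ofReal_re, sub_re, neg_im, ofReal_im, sub_im, neg_zero, zero_mul,
    sub_zero]
  nlinarith

lemma integral_div_sub_eq_integral_Ioi_integral {X : Type*} [MeasurableSpace X] {μ : Measure X}
    [SFinite μ] {a : X → ℂ} {ψ : X → ℝ} (ha : Integrable a μ) (hψ : Measurable ψ)
    (hψ_nonneg : ∀ x, 0 ≤ ψ x) {z : ℂ} (hz : z.re < 0) :
    IntegrableOn (fun t : ℝ => ∫ x, a x * cexp (-t * (ψ x - z)) ∂μ) (Ioi 0) ∧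
      ∫ x, a x / (ψ x - z) ∂μ = ∫ t in Ioi (0 : ℝ), ∫ x, a x * cexp (-t * (ψ x - z)) ∂μ := by
  set F : X → ℝ → ℂ := fun x t => a x * cexp (-t * (ψ x - z))
  have hF : Integrable (Function.uncurry F) (μ.prod (volume.restrict (Ioi 0))) := by
    refine (ha.norm.mul_prod (integrableOn_exp_mul_Ioi hz 0)).mono' ?_ ?_
    · exact ha.aestronglyMeasurable.comp_fst.mul
        (by fun_prop : Measurable fun p : X × ℝ => cexp (-p.2 * (ψ p.1 - z))).aestronglyMeasurable
    · filter_upwards [Measure.quasiMeasurePreserving_snd.ae (ae_restrict_mem measurableSet_Ioi)]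
        with p hp
      exact (norm_mul_le _ _).trans (mul_le_mul_of_nonneg_left
        (norm_cexp_neg_mul_sub_le (hψ_nonneg _) hp.le z) (norm_nonneg _))
  have hlaplace : ∀ x, a x / (ψ x - z) = ∫ t in Ioi (0 : ℝ), F x t := fun x => by
    rw [integral_const_mul, integral_Ioi_cexp_neg_mul (by simp; linarith [hψ_nonneg x]),
      div_eq_mul_inv]
  refine ⟨hF.integral_prod_right, ?_⟩
  simp_rw [hlaplace]
  exact integral_integral_swap hF

lemma setIntegral_univ_pi_prod_eq_prod {ι 𝕜 : Type*} [RCLike 𝕜] [Fintype ι] {E : ι → Type*}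
    [∀ i, MeasurableSpace (E i)] (μ : ∀ i, Measure (E i)) [∀ i, SigmaFinite (μ i)]
    (s : ∀ i, Set (E i)) (f : ∀ i, E i → 𝕜) :
    ∫ x in univ.pi s, ∏ i, f i (x i) ∂Measure.pi μ = ∏ i, ∫ y in s i, f i y ∂μ i := by
  rw [Measure.restrict_pi_pi, integral_fintype_prod_eq_prod]

noncomputable def laplacianSymbol (d : ℕ) (θ : Fin d → ℝ) : ℝ :=
  2 * d - 2 * ∑ j, Real.cos (θ j)

lemma laplacianSymbol_nonneg (d : ℕ) (θ : Fin d → ℝ) : 0 ≤ laplacianSymbol d θ := by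
  have : ∑ j, Real.cos (θ j) ≤ d := by
    simpa using Finset.sum_le_sum fun j (_ : j ∈ Finset.univ) => Real.cos_le_one (θ j)
  rw [laplacianSymbol]
  linarith

lemma continuous_laplacianSymbol (d : ℕ) : Continuous (laplacianSymbol d) := by
  unfold laplacianSymbol
  fun_prop

lemma ofReal_laplacianSymbol (d : ℕ) (θ : Fin d → ℝ) :
    (laplacianSymbol d θ : ℂ) = 2 * d - 2 * ∑ j, (Real.cos (θ j) : ℂ) := by
  push_cast [laplacianSymbol]
  rfl

lemma cexp_I_mul_sum_mul_cexp_neg_mul_laplacianSymbol_sub (d : ℕ) (n : Fin d → ℤ) (z : ℂ)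
    (t : ℝ) (θ : Fin d → ℝ) :
    cexp (I * ∑ j, (n j : ℂ) * θ j) * cexp (-t * (laplacianSymbol d θ - z)) =
      cexp (-t * (2 * d - z)) *
        ∏ j, (cexp (I * n j * θ j) * cexp ((2 * t : ℝ) * Real.cos (θ j))) := by
  rw [Finset.prod_mul_distrib, ← exp_sum, ← exp_sum, ← exp_add, ← exp_add, ← exp_add,
    ofReal_laplacianSymbol]
  have hI : ∑ j, I * n j * θ j = I * ∑ j, (n j : ℂ) * θ j := by
    simp_rw [Finset.mul_sum, mul_assoc]
  have hcos :
      ∑ j, ((2 * t : ℝ) : ℂ) * Real.cos (θ j) = 2 * t * ∑ j, (Real.cos (θ j) : ℂ) := by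
    push_cast
    rw [Finset.mul_sum]
  rw [hI, hcos]
  congr 1
  ring

lemma setIntegral_cexp_I_mul_sum_mul_cexp_neg_mul_laplacianSymbol_sub (d : ℕ) (n : Fin d → ℤ)
    (z : ℂ) (t : ℝ) :
    ∫ θ in univ.pi fun _ => Icc (-π) π,
        cexp (I * ∑ j, (n j : ℂ) * θ j) * cexp (-t * (laplacianSymbol d θ - z)) =
      (2 * π) ^ d * (cexp (-t * (2 * d - z)) * ∏ j, (besselI (n j).natAbs (2 * t) : ℂ)) := by
  simp_rw [cexp_I_mul_sum_mul_cexp_neg_mul_laplacianSymbol_sub]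
  rw [integral_const_mul, volume_pi, setIntegral_univ_pi_prod_eq_prod _ _
    fun j (x : ℝ) => cexp (I * n j * x) * cexp ((2 * t : ℝ) * Real.cos x)]
  simp_rw [integral_Icc_cexp_I_mul_int_mul_cexp_mul_cos,
    Finset.prod_mul_distrib, Finset.prod_const, Finset.card_univ, Fintype.card_fin]
  ring

theorem resolvent_eq_laplace_transform_besselI_general (d : ℕ) (n : Fin d → ℤ)
    (z : ℂ) (hz : z.re < 0) :
    IntegrableOn (fun t : ℝ =>
      Complex.exp (-(t : ℂ) * (2 * d - z)) * ∏ j, (besselI (n j).natAbs (2 * t) : ℂ))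
      (Set.Ioi 0) ∧
    G d z n = ∫ t in Set.Ioi (0 : ℝ),
      Complex.exp (-(t : ℂ) * (2 * d - z)) * ∏ j, (besselI (n j).natAbs (2 * t) : ℂ) := by
  have h2π : (2 * π : ℂ) ^ d ≠ 0 := by simp [Real.pi_ne_zero]
  have ha : IntegrableOn (fun θ : Fin d → ℝ => cexp (I * ∑ j, (n j : ℂ) * θ j))
      (univ.pi fun _ => Icc (-π) π) :=
    ContinuousOn.integrableOn_compact (isCompact_univ_pi fun _ => isCompact_Icc) (by fun_prop)
  obtain ⟨hint, heq⟩ := integral_div_sub_eq_integral_Ioi_integral ha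
    (continuous_laplacianSymbol d).measurable (laplacianSymbol_nonneg d) hz
  simp_rw [setIntegral_cexp_I_mul_sum_mul_cexp_neg_mul_laplacianSymbol_sub] at hint heq
  refine ⟨(integrable_const_mul_iff h2π.isUnit _).1 hint, ?_⟩
  simp_rw [G, ← ofReal_laplacianSymbol, heq, integral_const_mul, zpow_neg, zpow_natCast,
    inv_mul_cancel_left₀ h2π]

/-- Laplace-transform representation of the resolvent for `Re z < 0`:
`G(z,n) = ∫₀^∞ e^{-t(2d-z)} Π_j I_{|n_j|}(2t) dt`. -/
theorem resolvent_eq_laplace_transform_besselI (d : ℕ) (hd : 0 < d) (n : Fin d → ℤ)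
    (z : ℂ) (hz : z.re < 0) :
    IntegrableOn (fun t : ℝ =>
      Complex.exp (-(t : ℂ) * (2 * d - z)) * ∏ j, (besselI (n j).natAbs (2 * t) : ℂ))
      (Set.Ioi 0) ∧
    G d z n = ∫ t in Set.Ioi (0 : ℝ),
      Complex.exp (-(t : ℂ) * (2 * d - z)) * ∏ j, (besselI (n j).natAbs (2 * t) : ℂ) :=
  resolvent_eq_laplace_transform_besselI_general d n z hz
end

section
/- Let d = 1. For every z ∈ ℂ ∖ [0,4] and every n ∈ ℤ one has G(z,n) = (2 − z − √(−z)·√(4−z))^{|n|} / (2^{|n|} · √(−z)·√(4−z)). -/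
open MeasureTheory

/-!
Let `s = √(-z)·√(4-z)` and `w = (2 - z - s)/2`, so that `s² = (2-z)² - 4` and `w + w⁻¹ = 2 - z`.
Since `Im(-z) = Im(4-z)`, and `-z`, `4-z` have the same sign when `z` is real and outside `[0,4]`,
their arguments differ by less than `π`; hence `Re(√(-z)·conj √(4-z)) > 0`, which gives
`Re((2-z)·conj s) > 0`, i.e. `|2-z-s| < |2-z+s|`, and as the product of these is `4`, `|w| < 1`.
With `x = e^{it}` one has `w + w⁻¹ - 2 cos t = (1 - wx)(1 - w/x)/w`, so expanding both factors in
geometric series gives the Fourier expansion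
`1/(w + w⁻¹ - 2 cos t) = w/(1-w²) · ∑_{m ∈ ℤ} w^{|m|} e^{imt}`,
whose `n`-th coefficient is `w^{|n|}·w/(1-w²) = w^{|n|}/s`.
-/

open Complex Real ComplexConjugate intervalIntegral

theorem summable_pow_natAbs {r : ℝ} (h0 : 0 ≤ r) (h1 : r < 1) :
    Summable fun m : ℤ => r ^ m.natAbs := by
  have hgeo := summable_geometric_of_lt_one h0 h1
  refine .of_nat_of_neg_add_one (by simpa using hgeo) ?_
  refine ((summable_nat_add_iff 1).2 hgeo).congr fun k => ?_
  rw [show (-((k : ℤ) + 1)).natAbs = k + 1 by omega]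

theorem hasSum_pow_natAbs_mul_zpow {w x : ℂ} (hw : ‖w‖ < 1) (hx : ‖x‖ = 1) :
    HasSum (fun m : ℤ => w ^ m.natAbs * x ^ m)
      ((1 - w ^ 2) / ((1 - w * x) * (1 - w * x⁻¹))) := by
  have hx0 : x ≠ 0 := norm_ne_zero_iff.1 (by rw [hx]; exact one_ne_zero)
  have hwx : ‖w * x‖ < 1 := by rwa [norm_mul, hx, mul_one]
  have hwx' : ‖w * x⁻¹‖ < 1 := by rwa [norm_mul, norm_inv, hx, inv_one, mul_one]
  have hpos : HasSum (fun k : ℕ => w ^ (k : ℤ).natAbs * x ^ (k : ℤ)) (1 - w * x)⁻¹ :=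
    (hasSum_geometric_of_norm_lt_one hwx).congr_fun fun k => by simp [mul_pow]
  have hneg : HasSum (fun k : ℕ => w ^ (-((k : ℤ) + 1)).natAbs * x ^ (-((k : ℤ) + 1)))
      (w * x⁻¹ * (1 - w * x⁻¹)⁻¹) :=
    ((hasSum_geometric_of_norm_lt_one hwx').mul_left (w * x⁻¹)).congr_fun fun k => by
      rw [show (-((k : ℤ) + 1)).natAbs = k + 1 by omega, zpow_neg,
        show (k : ℤ) + 1 = (k + 1 : ℕ) by push_cast; ring, zpow_natCast]
      ring
  have hsum : (1 - w * x)⁻¹ + w * x⁻¹ * (1 - w * x⁻¹)⁻¹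
      = (1 - w ^ 2) / ((1 - w * x) * (1 - w * x⁻¹)) := by
    have h1 := (isUnit_one_sub_of_norm_lt_one hwx).ne_zero
    have h2 : x - w ≠ 0 := fun h => (isUnit_one_sub_of_norm_lt_one hwx').ne_zero (by
      field_simp; linear_combination h)
    field_simp
    ring
  exact hsum ▸ hpos.of_nat_of_neg_add_one hneg

theorem hasSum_inv_add_inv_sub_two_cos {w : ℂ} (hw : ‖w‖ < 1) (hw0 : w ≠ 0) (t : ℝ) :
    HasSum (fun m : ℤ => w / (1 - w ^ 2) * (w ^ m.natAbs * exp (m * t * I)))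
      (w + w⁻¹ - 2 * Real.cos t)⁻¹ := by
  set x := exp (t * I)
  have hx : ‖x‖ = 1 := norm_exp_ofReal_mul_I t
  have hx0 : x ≠ 0 := exp_ne_zero _
  have hcos : 2 * (Real.cos t : ℂ) = x + x⁻¹ := by
    rw [ofReal_cos, two_cos, ← Complex.exp_neg, neg_mul]
  have hw2 : 1 - w ^ 2 ≠ 0 := (isUnit_one_sub_of_norm_lt_one (by
    rw [norm_pow]; exact pow_lt_one₀ (norm_nonneg w) hw two_ne_zero)).ne_zero
  have hval : (w + w⁻¹ - 2 * Real.cos t)⁻¹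
      = w / (1 - w ^ 2) * ((1 - w ^ 2) / ((1 - w * x) * (1 - w * x⁻¹))) := by
    rw [hcos, mul_div_assoc', div_mul_cancel₀ w hw2, ← inv_div]
    congr 1
    field_simp
    ring
  refine hval ▸ ((hasSum_pow_natAbs_mul_zpow hw hx).mul_left _).congr_fun fun m => ?_
  rw [mul_assoc (m : ℂ), exp_int_mul]

theorem integral_exp_int_mul_I (k : ℤ) :
    ∫ t in -π..π, exp (k * t * I) = if k = 0 then 2 * π else 0 := by
  split_ifs with hk
  · simp [hk]
    ring
  · have hc : (k : ℂ) * I ≠ 0 := mul_ne_zero (Int.cast_ne_zero.2 hk) I_ne_zero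
    simp_rw [mul_right_comm _ _ I]
    rw [integral_exp_mul_complex hc, ofReal_neg, mul_neg, Complex.exp_neg, mul_assoc,
      mul_comm I, exp_int_mul, exp_pi_mul_I]
    rcases Int.even_or_odd k with he | ho
    · simp [he.neg_one_zpow]
    · simp [ho.neg_one_zpow]

theorem integral_exp_mul_div_add_inv_sub_two_cos {w : ℂ} (hw : ‖w‖ < 1) (hw0 : w ≠ 0)
    (n : ℤ) :
    ∫ t in -π..π, exp (I * (n * t)) / (w + w⁻¹ - 2 * Real.cos t) =
      2 * π * (w / (1 - w ^ 2) * w ^ n.natAbs) := by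
  set c := w / (1 - w ^ 2)
  have hterm : ∀ m : ℤ, ∫ t in -π..π, exp (I * (n * t)) * (c * (w ^ m.natAbs * exp (m * t * I)))
      = if m = -n then 2 * π * (c * w ^ n.natAbs) else 0 := by
    intro m
    have hexp : ∀ t : ℝ, exp (I * (n * t)) * (c * (w ^ m.natAbs * exp (m * t * I)))
        = c * w ^ m.natAbs * exp ((n + m : ℤ) * t * I) := fun t => by
      push_cast
      rw [add_mul, add_mul, Complex.exp_add]
      ring_nf
    simp_rw [hexp, intervalIntegral.integral_const_mul, integral_exp_int_mul_I]
    by_cases h : m = -n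
    · simp only [h, add_neg_cancel, if_true, Int.natAbs_neg]
      push_cast
      ring
    · simp [h, show n + m ≠ 0 by omega]
  -- term-by-term integration of the Fourier expansion, dominated by `‖c‖ ‖w‖ ^ |m|`
  have hsum := intervalIntegral.hasSum_integral_of_dominated_convergence
    (F := fun (m : ℤ) (t : ℝ) => exp (I * (n * t)) * (c * (w ^ m.natAbs * exp (m * t * I))))
    (μ := volume) (a := -π) (b := π)
    (fun m _ => ‖c‖ * ‖w‖ ^ m.natAbs) (fun m => by fun_prop)
    (fun m => .of_forall fun t _ => by simp [norm_exp])
    (.of_forall fun _ _ => (summable_pow_natAbs (norm_nonneg w) hw).mul_left ‖c‖)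
    intervalIntegrable_const
    (.of_forall fun t _ => (hasSum_inv_add_inv_sub_two_cos hw hw0 t).mul_left _)
  simp_rw [hterm, ← div_eq_mul_inv] at hsum
  exact hsum.unique (hasSum_ite_eq _ _)

theorem G_one_eq_intervalIntegral (z : ℂ) (n : ℤ) :
    G 1 z ![n] = (2 * π)⁻¹ * ∫ t in -π..π, exp (I * (n * t)) / (2 - 2 * Real.cos t - z) := by
  have hpre : (Set.univ.pi fun _ : Fin 1 => Set.Icc (-π) π) =
      MeasurableEquiv.funUnique (Fin 1) ℝ ⁻¹' Set.Icc (-π) π := by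
    ext θ
    simp [Pi.le_def]
  rw [G, intervalIntegral.integral_of_le (by linarith [pi_pos]), ← integral_Icc_eq_integral_Ioc,
    hpre, ← (volume_preserving_funUnique (Fin 1) ℝ).setIntegral_preimage_emb
      (MeasurableEquiv.funUnique (Fin 1) ℝ).measurableEmbedding]
  norm_num
  rfl

theorem G_one_eq_of_add_inv_eq {z w : ℂ} (hw : ‖w‖ < 1) (hw0 : w ≠ 0) (hzw : w + w⁻¹ = 2 - z) (n : ℤ) :
    G 1 z ![n] = w / (1 - w ^ 2) * w ^ n.natAbs := by
  have hden : ∀ t : ℝ, (2 - 2 * Real.cos t - z : ℂ) = w + w⁻¹ - 2 * Real.cos t := fun t => by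
    rw [hzw]; ring
  simp_rw [G_one_eq_intervalIntegral, hden, integral_exp_mul_div_add_inv_sub_two_cos hw hw0]
  have hπ : (π : ℂ) ≠ 0 := ofReal_ne_zero.2 pi_ne_zero
  push_cast
  field_simp

theorem G_one_eq_of_sq_sub_sq_eq_four {z s : ℂ} (hs : (2 - z) ^ 2 - s ^ 2 = 4)
    (hw : ‖(2 - z - s) / 2‖ < 1) (n : ℤ) :
    G 1 z ![n] = (2 - z - s) ^ n.natAbs / (2 ^ n.natAbs * s) := by
  set w := (2 - z - s) / 2
  have hprod : w * ((2 - z + s) / 2) = 1 := by linear_combination hs / 4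
  have hwinv : w⁻¹ = (2 - z + s) / 2 := (eq_inv_of_mul_eq_one_right hprod).symm
  have h1w : 1 - w ^ 2 = w * s := by linear_combination -hs / 4
  have hw0 : w ≠ 0 := left_ne_zero_of_mul_eq_one hprod
  have hs0 : s ≠ 0 := by
    intro h0
    have : ‖w‖ ^ 2 = 1 := by
      rw [← norm_pow, show w ^ 2 = 1 by linear_combination -h1w - w * h0, norm_one]
    nlinarith [norm_nonneg w]
  rw [G_one_eq_of_add_inv_eq hw hw0 (by rw [hwinv]; ring), h1w, div_pow]
  field_simp

theorem abs_arg_sub_arg_lt_pi {x y : ℂ} (him : x.im = y.im)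
    (hre : x.im = 0 → 0 < x.re * y.re) : |x.arg - y.arg| < π := by
  rw [abs_lt]
  rcases lt_trichotomy x.im 0 with h | h | h
  · have hx := arg_neg_iff.2 h
    have hy := arg_neg_iff.2 (him ▸ h)
    constructor <;> linarith [neg_pi_lt_arg x, neg_pi_lt_arg y]
  · have harg : x.arg = y.arg := by
      rcases pos_and_pos_or_neg_and_neg_of_mul_pos (hre h) with ⟨hx, hy⟩ | ⟨hx, hy⟩
      · rw [arg_eq_zero_iff.2 ⟨hx.le, h⟩, arg_eq_zero_iff.2 ⟨hy.le, him ▸ h⟩]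
      · rw [arg_eq_pi_iff.2 ⟨hx, h⟩, arg_eq_pi_iff.2 ⟨hy, him ▸ h⟩]
    constructor <;> linarith [pi_pos]
  · have hx := arg_lt_pi_iff.2 (Or.inr h.ne')
    have hy := arg_lt_pi_iff.2 (Or.inr (him ▸ h).ne')
    constructor <;> linarith [arg_nonneg_iff.2 h.le, arg_nonneg_iff.2 (him ▸ h).le]

theorem re_cpow_half_mul_conj_cpow_half {x y : ℂ} (hx : x ≠ 0) (hy : y ≠ 0) :
    (x ^ (1 / 2 : ℂ) * conj (y ^ (1 / 2 : ℂ))).re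
      = Real.exp (((log x).re + (log y).re) / 2) * Real.cos ((x.arg - y.arg) / 2) := by
  rw [cpow_def_of_ne_zero hx, cpow_def_of_ne_zero hy, ← exp_conj, ← Complex.exp_add, exp_re]
  simp [log_im]
  ring_nf

theorem re_cpow_half_mul_conj_cpow_half_pos {x y : ℂ} (him : x.im = y.im)
    (hre : x.im = 0 → 0 < x.re * y.re) : 0 < (x ^ (1 / 2 : ℂ) * conj (y ^ (1 / 2 : ℂ))).re := by
  have hx : x ≠ 0 := by rintro rfl; simpa using hre rfl
  have hy : y ≠ 0 := by rintro rfl; simpa using hre him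
  have harg := abs_lt.1 (abs_arg_sub_arg_lt_pi him hre)
  rw [re_cpow_half_mul_conj_cpow_half hx hy]
  exact mul_pos (Real.exp_pos _) (Real.cos_pos_of_mem_Ioo ⟨by linarith, by linarith⟩)

theorem re_sq_add_sq_mul_conj_pos {a b : ℂ} (h : 0 < (a * conj b).re) :
    0 < ((a ^ 2 + b ^ 2) * conj (a * b)).re := by
  have ha : a ≠ 0 := by rintro rfl; simp at h
  have hexp : (a ^ 2 + b ^ 2) * conj (a * b)
      = normSq a * (a * conj b) + normSq b * conj (a * conj b) := by
    rw [← mul_conj, ← mul_conj]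
    simp only [map_mul, conj_conj]
    ring
  rw [hexp, add_re, re_ofReal_mul, re_ofReal_mul, conj_re]
  have := normSq_pos.2 ha
  nlinarith [normSq_nonneg b]

theorem norm_sub_lt_two_of_sq_sub_sq_eq_four {u s : ℂ} (h : u ^ 2 - s ^ 2 = 4)
    (hpos : 0 < (u * conj s).re) : ‖u - s‖ < 2 := by
  have hprod : ‖u - s‖ * ‖u + s‖ = 4 := by
    rw [← norm_mul, show (u - s) * (u + s) = 4 by linear_combination h]; norm_num
  have hlt : ‖u - s‖ ^ 2 < ‖u + s‖ ^ 2 := by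
    rw [Complex.sq_norm, Complex.sq_norm, normSq_sub, normSq_add]; linarith
  nlinarith [norm_nonneg (u - s), norm_nonneg (u + s)]

/-- Closed formula for the one-dimensional resolvent kernel:
`G(z,n) = (2 - z - √(-z)√(4-z))^{|n|} / (2^{|n|} √(-z)√(4-z))` for `z ∉ [0,4]`,
where the square roots are principal complex powers. -/
theorem resolvent_dim_one_closed_formula (n : ℤ) (z : ℂ)
    (hz : ∀ x : ℝ, 0 ≤ x → x ≤ 4 → z ≠ (x : ℂ)) :
    G 1 z ![n] =
      (2 - z - (-z) ^ ((1 : ℂ) / 2) * (4 - z) ^ ((1 : ℂ) / 2)) ^ n.natAbs /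
        (2 ^ n.natAbs * ((-z) ^ ((1 : ℂ) / 2) * (4 - z) ^ ((1 : ℂ) / 2))) := by
  set a := (-z) ^ ((1 : ℂ) / 2)
  set b := (4 - z) ^ ((1 : ℂ) / 2)
  have ha : a ^ 2 = -z := by convert cpow_nat_inv_pow (-z) two_ne_zero using 3; norm_num
  have hb : b ^ 2 = 4 - z := by convert cpow_nat_inv_pow (4 - z) two_ne_zero using 3; norm_num
  have hab : 0 < (a * conj b).re := re_cpow_half_mul_conj_cpow_half_pos (by simp) fun him => by
    have hre : z.re < 0 ∨ 4 < z.re := by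
      by_contra! h
      exact hz z.re h.1 h.2 (ext rfl (by simpa using him))
    simp only [neg_re, sub_re, re_ofNat]
    rcases hre with h | h <;> nlinarith
  have hsq : (2 - z) ^ 2 - (a * b) ^ 2 = 4 := by linear_combination (-b ^ 2) * ha + z * hb
  have hpos : 0 < ((2 - z) * conj (a * b)).re := by
    rw [show 2 - z = (a ^ 2 + b ^ 2) / 2 by rw [ha, hb]; ring, div_mul_eq_mul_div, div_ofNat_re]
    exact half_pos (re_sq_add_sq_mul_conj_pos hab)
  refine G_one_eq_of_sq_sub_sq_eq_four hsq ?_ n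
  rw [norm_div, RCLike.norm_ofNat]
  linarith [norm_sub_lt_two_of_sq_sub_sq_eq_four hsq hpos]
end

section
/- Let d ∈ ℕ, k ∈ ℕ₀ and n ∈ ℤ^d. The number of sequences (w₁,…,w_k) with each wᵢ ∈ {e₁,−e₁,…,e_d,−e_d} ⊂ ℤ^d and w₁ + ⋯ + w_k = n equals Σ_{α ∈ ℕ₀^d, 2(α₁+⋯+α_d) = k−|n|} k! / (α₁!⋯α_d! · (α₁+|n₁|)!⋯(α_d+|n_d|)!) when k ≥ |n| and k − |n| is even, and equals 0 otherwise. -/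
/-!
A walk is a word over the `2d` letters `±e_j`, and its endpoint depends only on its letter
counts `c`: coordinate `j` is `c (+e_j) - c (-e_j)`. The number of words with prescribed letter
counts is the multinomial coefficient `k! / ∏ c!`, read off as a coefficient of `(∑ X_b)^k`.
The letter counts of a walk to `n` are recovered from `α_j = min (c (+e_j)) (c (-e_j))` as
`α_j + |n_j|` in the direction of `n_j` and `α_j` in the other, so their total is
`2 ∑ α_j + |n| = k`, which fixes the parity condition and the sum over `α`.
-/

open Finset MvPolynomial

theorem Nat.cast_multinomial_eq_div {ι K : Type*} [Field K] [CharZero K] (s : Finset ι)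
    (f : ι → ℕ) :
    (Nat.multinomial s f : K) = ((∑ i ∈ s, f i).factorial : K) / ∏ i ∈ s, ((f i).factorial : K) := by
  rw [eq_div_iff (prod_ne_zero_iff.2 fun i _ => by exact_mod_cast (f i).factorial_ne_zero),
    mul_comm]
  exact_mod_cast Nat.multinomial_spec s f

section LetterCount

variable {β : Type*} [Fintype β] [DecidableEq β] {k : ℕ}

def letterCount (w : Fin k → β) (b : β) : ℕ := #{i | w i = b}

theorem sum_letterCount (w : Fin k → β) : ∑ b, letterCount w b = k := by
  simpa [letterCount] using (card_eq_sum_card_fiberwise (f := w) (s := univ) (t := univ)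
    fun _ _ => mem_univ _).symm

@[to_additive]
theorem prod_comp_eq_prod_pow_letterCount {M : Type*} [CommMonoid M] (w : Fin k → β)
    (g : β → M) : ∏ i, g (w i) = ∏ b, g b ^ letterCount w b := by
  simp_rw [letterCount, ← prod_const, prod_fiberwise_of_maps_to' (fun i _ => mem_univ (w i))]

theorem sum_X_pow_eq_sum_prod_X_pow_letterCount (R : Type*) [CommSemiring R] (k : ℕ) :
    (∑ b, X b : MvPolynomial β R) ^ k = ∑ w : Fin k → β, ∏ b, X b ^ letterCount w b := by
  rw [← Fin.prod_const, prod_univ_sum]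
  exact Fintype.sum_congr _ _ fun w => prod_comp_eq_prod_pow_letterCount w X

theorem card_letterCount_eq (k : ℕ) (c : β → ℕ) :
    #{w : Fin k → β | letterCount w = c} =
      if ∑ b, c b = k then Nat.multinomial univ c else 0 := by
  have h := congrArg (coeff (Finsupp.equivFunOnFinite.symm c))
    (sum_X_pow_eq_sum_prod_X_pow_letterCount ℕ (β := β) k)
  have coeff_eq_iff (w : Fin k → β) : Finsupp.equivFunOnFinite.symm c =
      Finsupp.indicator univ (fun b _ => letterCount w b) ↔ letterCount w = c := by
    simp [Finsupp.ext_iff, funext_iff, Finsupp.indicator_apply, eq_comm]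
  simp only [coeff_sum_X_pow_of_fintype, coeff_sum, coeff_prod_X_pow, coeff_eq_iff, sum_boole,
    Nat.cast_id] at h
  rw [← h, Finsupp.sum_fintype _ _ (fun _ => rfl),
    Finsupp.multinomial_eq_of_support_subset (subset_univ _)]
  rfl

end LetterCount

section Walks

variable {d k : ℕ}

def walkEnd (w : Fin k → Fin d × Bool) : Fin d → ℤ :=
  ∑ i, Pi.single (w i).1 (if (w i).2 then 1 else -1)

theorem walkEnd_apply (w : Fin k → Fin d × Bool) (j : Fin d) :
    walkEnd w j = letterCount w (j, true) - letterCount w (j, false) := by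
  rw [walkEnd, sum_comp_eq_sum_nsmul_letterCount w
    (fun p => (Pi.single p.1 (if p.2 then 1 else -1) : Fin d → ℤ)), Finset.sum_apply,
    Fintype.sum_prod_type]
  simp [Pi.single_apply, sub_eq_add_neg]

-- The letter counts of the walks indexed by `α` in the sum of `card_lattice_walks`.
def stepCounts (n : Fin d → ℤ) (α : Fin d → ℕ) (p : Fin d × Bool) : ℕ :=
  α p.1 + (if p.2 then n p.1 else -n p.1).toNat

theorem stepCounts_eq_iff (n : Fin d → ℤ) (α : Fin d → ℕ) (c : Fin d × Bool → ℕ) :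
    c = stepCounts n α ↔ (∀ j, (c (j, true) : ℤ) - c (j, false) = n j) ∧
      α = fun j => min (c (j, true)) (c (j, false)) := by
  simp only [funext_iff, Prod.forall, Bool.forall_bool, stepCounts, if_true,
    Bool.false_eq_true, if_false]
  constructor
  · intro h
    exact ⟨fun j => by have := h j; omega, fun j => by have := h j; omega⟩
  · rintro ⟨hdiff, hmin⟩ j
    have := hdiff j
    have := hmin j
    omega

theorem sum_stepCounts (n : Fin d → ℤ) (α : Fin d → ℕ) :
    ∑ p, stepCounts n α p = 2 * ∑ j, α j + ∑ j, (n j).natAbs := by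
  rw [Fintype.sum_prod_type, mul_sum, ← sum_add_distrib]
  refine sum_congr rfl fun j _ => ?_
  simp only [stepCounts, Fintype.sum_bool, if_true, Bool.false_eq_true, if_false]
  omega

theorem prod_factorial_stepCounts (n : Fin d → ℤ) (α : Fin d → ℕ) :
    ∏ p, (stepCounts n α p).factorial =
      (∏ j, (α j).factorial) * ∏ j, (α j + (n j).natAbs).factorial := by
  rw [Fintype.prod_prod_type, ← prod_mul_distrib]
  refine prod_congr rfl fun j _ => ?_
  simp only [stepCounts, Fintype.prod_bool, if_true, Bool.false_eq_true, if_false]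
  rcases le_total 0 (n j) with h | h
  · rw [show (n j).toNat = (n j).natAbs by omega, show (-n j).toNat = 0 by omega, add_zero,
      mul_comm]
  · rw [show (n j).toNat = 0 by omega, show (-n j).toNat = (n j).natAbs by omega, add_zero]

def minCount (w : Fin k → Fin d × Bool) (j : Fin d) : ℕ :=
  min (letterCount w (j, true)) (letterCount w (j, false))

theorem walkEnd_eq_and_minCount_eq_iff (w : Fin k → Fin d × Bool) (n : Fin d → ℤ)
    (α : Fin d → ℕ) : walkEnd w = n ∧ minCount w = α ↔ letterCount w = stepCounts n α := by
  rw [stepCounts_eq_iff, eq_comm (a := α), funext_iff]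
  simp only [walkEnd_apply]
  rfl

theorem length_eq_of_walkEnd_eq {w : Fin k → Fin d × Bool} {n : Fin d → ℤ}
    (h : walkEnd w = n) : k = 2 * ∑ j, minCount w j + ∑ j, (n j).natAbs := by
  have hc := (walkEnd_eq_and_minCount_eq_iff w n _).1 ⟨h, rfl⟩
  rw [← sum_stepCounts, ← hc, sum_letterCount]

theorem card_walkEnd_eq_and_minCount_eq (n : Fin d → ℤ) (α : Fin d → ℕ)
    (h : ∑ p, stepCounts n α p = k) :
    (#{w : Fin k → Fin d × Bool | walkEnd w = n ∧ minCount w = α} : ℚ) =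
      k.factorial / ((∏ j, ((α j).factorial : ℚ)) * ∏ j, ((α j + (n j).natAbs).factorial : ℚ)) := by
  simp_rw [walkEnd_eq_and_minCount_eq_iff]
  rw [card_letterCount_eq, if_pos h, Nat.cast_multinomial_eq_div, h]
  exact_mod_cast congrArg (k.factorial / · : ℕ → ℚ) (prod_factorial_stepCounts n α)

end Walks

theorem card_lattice_walks_general (d k : ℕ) (n : Fin d → ℤ) :
    ((Finset.univ.filter fun w : Fin k → Fin d × Bool =>
        (∑ i, (Pi.single (w i).1 (if (w i).2 then 1 else -1) : Fin d → ℤ)) = n).card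
      : ℚ)
    = if (∑ j, (n j).natAbs) ≤ k ∧ Even (k - ∑ j, (n j).natAbs) then
        ∑ α ∈ (Fintype.piFinset fun _ : Fin d => Finset.range (k + 1)).filter
            (fun α => 2 * ∑ j, α j = k - ∑ j, (n j).natAbs),
          (k.factorial : ℚ) /
            ((∏ j, ((α j).factorial : ℚ)) * ∏ j, ((α j + (n j).natAbs).factorial : ℚ))
      else 0 := by
  set N := ∑ j, (n j).natAbs
  split_ifs with hcond
  · rw [card_eq_sum_card_fiberwise (f := minCount) fun w hw => ?_]
    · push_cast
      refine sum_congr rfl fun α hα => ?_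
      rw [filter_filter]
      refine card_walkEnd_eq_and_minCount_eq n α ?_
      rw [sum_stepCounts]
      rw [mem_filter] at hα
      omega
    · have hk : k = 2 * ∑ j, minCount w j + N := length_eq_of_walkEnd_eq (mem_filter.1 hw).2
      have hle (j) : minCount w j ≤ ∑ j, minCount w j := single_le_sum (by simp) (mem_univ j)
      simp only [mem_coe, mem_filter, Fintype.mem_piFinset, mem_range]
      exact ⟨fun j => by have := hle j; omega, by omega⟩
  · rw [Nat.cast_eq_zero, card_eq_zero, eq_empty_iff_forall_notMem]
    intro w hw
    have hk : k = 2 * ∑ j, minCount w j + N := length_eq_of_walkEnd_eq (mem_filter.1 hw).2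
    exact hcond ⟨by omega, ⟨∑ j, minCount w j, by omega⟩⟩

/-- The number of `k`-step nearest-neighbour lattice walks from `0` to `n` in `ℤ^d`,
i.e. sequences `(w₁,…,w_k)` of signed standard basis vectors summing to `n`, equals
`Σ_{α : 2|α| = k - |n|} k! / (α₁!⋯α_d! (α₁+|n₁|)!⋯(α_d+|n_d|)!)` when `k ≥ |n|` and
`k - |n|` is even, and `0` otherwise. -/
theorem card_lattice_walks (d k : ℕ) (hd : 0 < d) (n : Fin d → ℤ) :
    ((Finset.univ.filter fun w : Fin k → Fin d × Bool =>
        (∑ i, (Pi.single (w i).1 (if (w i).2 then 1 else -1) : Fin d → ℤ)) = n).card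
      : ℚ)
    = if (∑ j, (n j).natAbs) ≤ k ∧ Even (k - ∑ j, (n j).natAbs) then
        ∑ α ∈ (Fintype.piFinset fun _ : Fin d => Finset.range (k + 1)).filter
            (fun α => 2 * ∑ j, α j = k - ∑ j, (n j).natAbs),
          (k.factorial : ℚ) /
            ((∏ j, ((α j).factorial : ℚ)) * ∏ j, ((α j + (n j).natAbs).factorial : ℚ))
      else 0 :=
  card_lattice_walks_general d k n
end

section
/- Let d = 2 and z ∈ ℂ ∖ [0,8]. Then: (i) for every (m,l) ∈ ℤ², 𝒫(m,l) = (1/4)|m||l|(z−4) − 𝒫₀(0) + 𝒫₀(m) + 𝒫₀(l) + ((z−4)²/4)·Σ_{μ=−|m|}^{|m|} Σ_{ν=−|l|}^{|l|} (|m|−|μ|)(|l|−|ν|)·𝒫(μ,ν); and (ii) for every (m,l) ∈ ℕ₀², 𝒬(m,l) = −1/4 − ((z−4)/4)·Σ_{μ=−m}^{m} Σ_{ν=−l}^{l} 𝒫(μ,ν). -/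
open MeasureTheory

/-- `𝒫(m,l) = (-1)^{m+l} G(z, m+l, m-l)`. -/
noncomputable def P (z : ℂ) (m l : ℤ) : ℂ := (-1 : ℂ) ^ (m + l) * G 2 z ![m + l, m - l]

/-- `𝒬(m,l) = (-1)^{m+l} G(z, m+l+1, m-l)`. -/
noncomputable def Q (z : ℂ) (m l : ℤ) : ℂ := (-1 : ℂ) ^ (m + l) * G 2 z ![m + l + 1, m - l]

/-- `𝒫₀(m) = (-1)^m G(z, m, m)`. -/
noncomputable def P₀ (z : ℂ) (m : ℤ) : ℂ := (-1 : ℂ) ^ m * G 2 z ![m, m]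

/-!
In Fourier space the discrete Laplacian is multiplication by its symbol, so `G 2 z` solves the
lattice equation `(4 - z) G(n) - ∑_{|e| = 1} G(n + e) = δ_{n,0}`. In the coordinates rotated by
45°, and with the checkerboard sign `(-1)^(m+l)`, this equation splits into two relations: `(4 - z) 𝒫` is `δ` plus a mixed second difference of `𝒬`, and `(4 - z) 𝒬` is a mixed
second difference of `𝒫`. Summing the first over the box `[-m, m] × [-l, l]` telescopes to the
four corner values of `𝒬`, which the reflection symmetries of `G` all identify with `± 𝒬(m, l)`;
this gives (ii). Summing the second over `[0, m) × [0, l)` and inserting (ii) gives (i): the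
weight `(m - |μ|)(l - |ν|)` counts the boxes `[-i, i] × [-j, j]` with `i < m`, `j < l` that
contain `(μ, ν)`.
-/

open Real

section Resolvent

open Set

variable {d : ℕ}

noncomputable def planeWave (n : Fin d → ℤ) (θ : Fin d → ℝ) : ℂ :=
  Complex.exp (Complex.I * ∑ j, (n j : ℂ) * (θ j : ℂ))

noncomputable def resolventDenom (d : ℕ) (z : ℂ) (θ : Fin d → ℝ) : ℂ :=
  2 * d - 2 * ∑ j, (Real.cos (θ j) : ℂ) - z

def torusBox (d : ℕ) : Set (Fin d → ℝ) := univ.pi fun _ => Icc (-π) π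

theorem G_eq_integral (z : ℂ) (n : Fin d → ℤ) :
    G d z n = (2 * (π : ℂ)) ^ (-(d : ℤ)) *
      ∫ θ in torusBox d, planeWave n θ / resolventDenom d z θ := rfl

theorem resolventDenom_ne_zero {z : ℂ} (hz : ∀ x : ℝ, 0 ≤ x → x ≤ 4 * d → z ≠ x)
    (θ : Fin d → ℝ) : resolventDenom d z θ ≠ 0 := by
  have hle : ∑ j, Real.cos (θ j) ≤ d :=
    (Finset.sum_le_sum fun j (_ : j ∈ Finset.univ) => Real.cos_le_one (θ j)).trans (by simp)
  have hge : -(d : ℝ) ≤ ∑ j, Real.cos (θ j) :=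
    (by simp : -(d : ℝ) = ∑ _j : Fin d, -1).trans_le
      (Finset.sum_le_sum fun j _ => Real.neg_one_le_cos (θ j))
  have h := hz (2 * d - 2 * ∑ j, Real.cos (θ j)) (by linarith) (by linarith)
  rw [resolventDenom, sub_ne_zero]
  exact_mod_cast h.symm

theorem continuous_planeWave (n : Fin d → ℤ) : Continuous (planeWave n) := by
  unfold planeWave; fun_prop

theorem integrableOn_resolvent {z : ℂ} (hz : ∀ x : ℝ, 0 ≤ x → x ≤ 4 * d → z ≠ x)
    (n : Fin d → ℤ) :
    IntegrableOn (fun θ => planeWave n θ / resolventDenom d z θ) (torusBox d) := by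
  refine ContinuousOn.integrableOn_compact (isCompact_univ_pi fun _ => isCompact_Icc) ?_
  refine ((continuous_planeWave n).div ?_ (resolventDenom_ne_zero hz)).continuousOn
  unfold resolventDenom; fun_prop

theorem integral_exp_int_mul_Icc (k : ℤ) :
    ∫ x in Icc (-π) π, Complex.exp (Complex.I * (k * x)) = if k = 0 then 2 * (π : ℂ) else 0 := by
  split_ifs with hk
  · simp [hk, two_mul, pi_pos.le]
  · have hc : Complex.I * k ≠ 0 := by simp [hk]
    simp_rw [← mul_assoc]
    rw [integral_Icc_eq_integral_Ioc, ← intervalIntegral.integral_of_le (by linarith [pi_pos]),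
      integral_exp_mul_complex hc, div_eq_zero_iff, sub_eq_zero,
      Complex.exp_eq_exp_iff_exists_int]
    exact Or.inl ⟨k, by push_cast; ring⟩

theorem planeWave_eq_prod (n : Fin d → ℤ) (θ : Fin d → ℝ) :
    planeWave n θ = ∏ j, Complex.exp (Complex.I * (n j * θ j)) := by
  rw [planeWave, Finset.mul_sum, Complex.exp_sum]

theorem integral_planeWave (n : Fin d → ℤ) :
    ∫ θ in torusBox d, planeWave n θ = if n = 0 then (2 * (π : ℂ)) ^ d else 0 := by
  simp_rw [planeWave_eq_prod]
  rw [torusBox, volume_pi, Measure.restrict_pi_pi,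
    integral_fintype_prod_eq_prod (fun j (x : ℝ) => Complex.exp (Complex.I * (n j * x)))]
  simp_rw [integral_exp_int_mul_Icc, Fintype.prod_ite_zero]
  simp [funext_iff]

theorem planeWave_add (n m : Fin d → ℤ) (θ : Fin d → ℝ) :
    planeWave (n + m) θ = planeWave n θ * planeWave m θ := by
  simp only [planeWave, ← Complex.exp_add, Pi.add_apply, Int.cast_add, add_mul,
    Finset.sum_add_distrib, mul_add]

theorem planeWave_neg (n : Fin d → ℤ) (θ : Fin d → ℝ) :
    planeWave (-n) θ = (planeWave n θ)⁻¹ := by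
  simp only [planeWave, ← Complex.exp_neg, Pi.neg_apply, Int.cast_neg, neg_mul,
    Finset.sum_neg_distrib, mul_neg]

theorem planeWave_single (j : Fin d) (θ : Fin d → ℝ) :
    planeWave (Pi.single j 1) θ = Complex.exp (Complex.I * θ j) := by
  simp [planeWave, Pi.single_apply]

theorem planeWave_add_single_add_sub_single (n : Fin d → ℤ) (j : Fin d) (θ : Fin d → ℝ) :
    planeWave (n + Pi.single j 1) θ + planeWave (n - Pi.single j 1) θ =
      planeWave n θ * (2 * Real.cos (θ j)) := by
  rw [sub_eq_add_neg, planeWave_add, planeWave_add, planeWave_neg, planeWave_single,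
    Complex.ofReal_cos, Complex.two_cos, ← Complex.exp_neg]
  ring_nf

theorem resolvent_lattice_pointwise {z : ℂ} (hz : ∀ x : ℝ, 0 ≤ x → x ≤ 4 * d → z ≠ x)
    (n : Fin d → ℤ) (θ : Fin d → ℝ) :
    (2 * d - z) * (planeWave n θ / resolventDenom d z θ) -
        ∑ j, (planeWave (n + Pi.single j 1) θ / resolventDenom d z θ +
          planeWave (n - Pi.single j 1) θ / resolventDenom d z θ) = planeWave n θ := by
  have hD := resolventDenom_ne_zero hz θ
  simp_rw [← add_div, planeWave_add_single_add_sub_single, ← Finset.sum_div, ← Finset.mul_sum]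
  rw [mul_div_assoc', ← sub_div, div_eq_iff hD, resolventDenom]
  ring

theorem G_lattice {z : ℂ} (hz : ∀ x : ℝ, 0 ≤ x → x ≤ 4 * d → z ≠ x) (n : Fin d → ℤ) :
    (2 * d - z) * G d z n - ∑ j, (G d z (n + Pi.single j 1) + G d z (n - Pi.single j 1)) =
      if n = 0 then 1 else 0 := by
  have hF := integrableOn_resolvent hz
  have hsum : IntegrableOn (fun θ => ∑ j,
      (planeWave (n + Pi.single j 1) θ / resolventDenom d z θ +
        planeWave (n - Pi.single j 1) θ / resolventDenom d z θ)) (torusBox d) :=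
    integrable_finsetSum _ fun j _ => (hF _).add (hF _)
  calc _ = (2 * (π : ℂ)) ^ (-(d : ℤ)) * ∫ θ in torusBox d,
        ((2 * d - z) * (planeWave n θ / resolventDenom d z θ) -
          ∑ j, (planeWave (n + Pi.single j 1) θ / resolventDenom d z θ +
            planeWave (n - Pi.single j 1) θ / resolventDenom d z θ)) := by
        rw [integral_sub ((hF n).const_mul _) hsum, integral_const_mul, integral_finsetSum]
        · simp only [G_eq_integral, integral_add (hF _) (hF _), ← mul_add, ← Finset.mul_sum]
          ring
        · exact fun j _ => (hF _).add (hF _)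
    _ = (2 * (π : ℂ)) ^ (-(d : ℤ)) * ∫ θ in torusBox d, planeWave n θ := by
        simp only [resolvent_lattice_pointwise hz]
    _ = if n = 0 then 1 else 0 := by
        rw [integral_planeWave]
        split_ifs
        · rw [zpow_neg, zpow_natCast, inv_mul_cancel₀ (by simp [pi_ne_zero])]
        · rw [mul_zero]

theorem G_eq_of_measurePreserving {z : ℂ} {n n' : Fin d → ℤ}
    (T : (Fin d → ℝ) ≃ᵐ (Fin d → ℝ)) (hT : MeasurePreserving T)
    (hbox : T ⁻¹' torusBox d = torusBox d) (hwave : ∀ θ, planeWave n' (T θ) = planeWave n θ)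
    (hdenom : ∀ θ, resolventDenom d z (T θ) = resolventDenom d z θ) : G d z n' = G d z n := by
  rw [G_eq_integral, G_eq_integral, ← hT.setIntegral_preimage_emb T.measurableEmbedding, hbox]
  simp only [hwave, hdenom]

theorem G_comp_perm (z : ℂ) (σ : Equiv.Perm (Fin d)) (n : Fin d → ℤ) :
    G d z (n ∘ σ) = G d z n := by
  have hT (θ : Fin d → ℝ) : MeasurableEquiv.arrowCongr' σ.symm (.refl ℝ) θ = θ ∘ σ := rfl
  refine G_eq_of_measurePreserving _ (volume_preserving_arrowCongr' σ.symm (.refl ℝ) (.id volume))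
    ?_ (fun θ => ?_) (fun θ => ?_)
  · ext θ
    simp only [torusBox, mem_preimage, hT, mem_univ_pi, Function.comp_apply]
    exact σ.forall_congr_right (q := fun i => θ i ∈ Icc (-π) π)
  · simp only [planeWave, hT, Function.comp_apply]
    rw [Equiv.sum_comp σ (fun j => (n j : ℂ) * (θ j : ℂ))]
  · simp only [resolventDenom, hT, Function.comp_apply]
    rw [Equiv.sum_comp σ (fun j => (Real.cos (θ j) : ℂ))]

theorem G_neg_coord (z : ℂ) (j : Fin d) (n : Fin d → ℤ) :
    G d z (fun i => if i = j then -n i else n i) = G d z n := by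
  let T : (Fin d → ℝ) ≃ᵐ (Fin d → ℝ) :=
    .piCongrRight fun i => if i = j then .neg ℝ else .refl ℝ
  have hT (θ : Fin d → ℝ) (i : Fin d) : T θ i = if i = j then -θ i else θ i := by
    by_cases h : i = j <;> simp [T, h, MeasurableEquiv.piCongrRight]
  have hTp : MeasurePreserving T := by
    refine volume_preserving_pi fun i => ?_
    by_cases h : i = j
    · simp only [h, if_true]
      exact Measure.measurePreserving_neg volume
    · simp only [h, if_false]
      exact .id volume
  refine G_eq_of_measurePreserving T hTp ?_ (fun θ => ?_) (fun θ => ?_)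
  · ext θ
    simp only [torusBox, mem_preimage, mem_univ_pi, hT]
    refine forall_congr' fun i => ?_
    split_ifs
    · simp only [mem_Icc]
      constructor <;> rintro ⟨h1, h2⟩ <;> constructor <;> linarith
    · rfl
  · simp only [planeWave, hT]
    congr 2
    refine Finset.sum_congr rfl fun i _ => ?_
    split_ifs <;> push_cast <;> ring
  · simp only [resolventDenom, hT, apply_ite Real.cos, Real.cos_neg, ite_self]

end Resolvent

section NegOnePow

variable {K : Type*} [DivisionRing K]

theorem neg_one_zpow_add_one (k : ℤ) : (-1 : K) ^ (k + 1) = -(-1) ^ k := by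
  rw [zpow_add_one₀ (by norm_num), mul_neg_one]

theorem neg_one_zpow_sub_one (k : ℤ) : (-1 : K) ^ (k - 1) = -(-1) ^ k := by
  rw [zpow_sub_one₀ (by norm_num), inv_neg, inv_one, mul_neg_one]

theorem neg_one_zpow_eq_of_even_sub {a b : ℤ} (h : Even (a - b)) :
    (-1 : K) ^ a = (-1) ^ b := by
  rw [← sub_add_cancel a b, zpow_add₀ (by norm_num), h.neg_one_zpow, one_mul]

theorem neg_one_zpow_eq_neg_of_odd_sub {a b : ℤ} (h : Odd (a - b)) :
    (-1 : K) ^ a = -(-1) ^ b := by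
  rw [← sub_add_cancel a b, zpow_add₀ (by norm_num), h.neg_one_zpow, neg_one_mul]

end NegOnePow

section PlaneLattice

variable (z : ℂ)

theorem G_two_comm (a b : ℤ) : G 2 z ![b, a] = G 2 z ![a, b] := by
  convert G_comp_perm z (Equiv.swap 0 1) ![a, b] using 2
  ext i; fin_cases i <;> rfl

theorem G_two_neg_right (a b : ℤ) : G 2 z ![a, -b] = G 2 z ![a, b] := by
  convert G_neg_coord z 1 ![a, b] using 2
  ext i; fin_cases i <;> simp

theorem G_two_neg_left (a b : ℤ) : G 2 z ![-a, b] = G 2 z ![a, b] := by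
  rw [G_two_comm, G_two_neg_right, G_two_comm]

variable {z}

theorem G_two_lattice (hz : ∀ x : ℝ, 0 ≤ x → x ≤ 8 → z ≠ x) (a b : ℤ) :
    (4 - z) * G 2 z ![a, b] - G 2 z ![a + 1, b] - G 2 z ![a - 1, b] - G 2 z ![a, b + 1]
      - G 2 z ![a, b - 1] = if a = 0 ∧ b = 0 then 1 else 0 := by
  have h := G_lattice (d := 2) (fun x h0 h8 => hz x h0 (by norm_num at h8; exact h8)) ![a, b]
  simp only [Fin.sum_univ_two, Matrix.cons_add, Matrix.cons_sub, Matrix.empty_add_empty,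
    Matrix.empty_sub_empty, Matrix.vecHead, Matrix.vecTail, Function.comp_apply,
    Fin.succ_zero_eq_one, Pi.single_eq_same, Pi.single_eq_of_ne zero_ne_one.symm,
    Pi.single_eq_of_ne one_ne_zero.symm, add_zero, sub_zero, Matrix.cons_eq_zero_iff,
    Matrix.zero_empty, and_true] at h
  linear_combination h

noncomputable def signedG (z : ℂ) (a b : ℤ) : ℂ := (-1 : ℂ) ^ a * G 2 z ![a, b]

theorem signedG_lattice (hz : ∀ x : ℝ, 0 ≤ x → x ≤ 8 → z ≠ x) (a b : ℤ) :
    (4 - z) * signedG z a b + signedG z (a + 1) b + signedG z (a - 1) b - signedG z a (b + 1)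
      - signedG z a (b - 1) = if a = 0 ∧ b = 0 then 1 else 0 := by
  have hδ : (-1 : ℂ) ^ a * (if a = 0 ∧ b = 0 then 1 else 0) =
      if a = 0 ∧ b = 0 then 1 else 0 := by
    split_ifs with h
    · simp [h.1]
    · simp
  simp only [signedG, neg_one_zpow_add_one, neg_one_zpow_sub_one]
  linear_combination (-1 : ℂ) ^ a * G_two_lattice hz a b + hδ

theorem P_eq_signedG {m l a b : ℤ} (ha : a = m + l) (hb : b = m - l) :
    P z m l = signedG z a b := by
  rw [ha, hb]; rfl

theorem Q_eq_neg_signedG {m l a b : ℤ} (ha : a = m + l + 1) (hb : b = m - l) :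
    Q z m l = -signedG z a b := by
  rw [ha, hb, Q, signedG, neg_one_zpow_add_one, neg_mul, neg_neg]

theorem P_lattice (hz : ∀ x : ℝ, 0 ≤ x → x ≤ 8 → z ≠ x) (m l : ℤ) :
    (4 - z) * P z m l = (if m = 0 ∧ l = 0 then 1 else 0)
      + (Q z m l - Q z (m - 1) l - Q z m (l - 1) + Q z (m - 1) (l - 1)) := by
  have hδ : (m + l = 0 ∧ m - l = 0) ↔ (m = 0 ∧ l = 0) := by omega
  have h := signedG_lattice hz (m + l) (m - l)
  rw [if_congr hδ rfl rfl] at h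
  have e₀ : P z m l = signedG z (m + l) (m - l) := P_eq_signedG rfl rfl
  have e₁ : Q z m l = -signedG z (m + l + 1) (m - l) := Q_eq_neg_signedG rfl rfl
  have e₂ : Q z (m - 1) l = -signedG z (m + l) (m - l - 1) := Q_eq_neg_signedG (by ring) (by ring)
  have e₃ : Q z m (l - 1) = -signedG z (m + l) (m - l + 1) := Q_eq_neg_signedG (by ring) (by ring)
  have e₄ : Q z (m - 1) (l - 1) = -signedG z (m + l - 1) (m - l) :=
    Q_eq_neg_signedG (by ring) (by ring)
  linear_combination h + (4 - z) * e₀ - e₁ + e₂ + e₃ - e₄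

theorem Q_lattice (hz : ∀ x : ℝ, 0 ≤ x → x ≤ 8 → z ≠ x) (m l : ℤ) :
    (4 - z) * Q z m l = P z (m + 1) (l + 1) - P z (m + 1) l - P z m (l + 1) + P z m l := by
  have h := signedG_lattice hz (m + l + 1) (m - l)
  rw [if_neg (by omega)] at h
  have e₀ : Q z m l = -signedG z (m + l + 1) (m - l) := Q_eq_neg_signedG rfl rfl
  have e₁ : P z (m + 1) (l + 1) = signedG z (m + l + 1 + 1) (m - l) :=
    P_eq_signedG (by ring) (by ring)
  have e₂ : P z (m + 1) l = signedG z (m + l + 1) (m - l + 1) := P_eq_signedG (by ring) (by ring)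
  have e₃ : P z m (l + 1) = signedG z (m + l + 1) (m - l - 1) := P_eq_signedG (by ring) (by ring)
  have e₄ : P z m l = signedG z (m + l + 1 - 1) (m - l) := P_eq_signedG (by ring) (by ring)
  linear_combination -h + (4 - z) * e₀ - e₁ + e₂ + e₃ - e₄

end PlaneLattice

section Symmetries

variable (z : ℂ)

theorem P_comm (m l : ℤ) : P z m l = P z l m := by
  rw [P, P, add_comm l m, show l - m = -(m - l) by ring, G_two_neg_right]

theorem P_neg_right (m l : ℤ) : P z m (-l) = P z m l := by
  rw [P, P, show m + -l = m - l by ring, show m - -l = m + l by ring, G_two_comm,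
    neg_one_zpow_eq_of_even_sub (a := m - l) (b := m + l) ⟨-l, by ring⟩]

theorem P_neg_left (m l : ℤ) : P z (-m) l = P z m l := by
  rw [P_comm, P_neg_right, P_comm]

theorem P_natAbs (m l : ℤ) : P z m l = P z m.natAbs l.natAbs := by
  rcases Int.natAbs_eq m with hm | hm <;> rcases Int.natAbs_eq l with hl | hl <;>
    nth_rw 1 [hm, hl] <;> simp only [P_neg_left, P_neg_right]

theorem P_zero_right (m : ℤ) : P z m 0 = P₀ z m := by
  rw [P, P₀, add_zero, sub_zero]

theorem P_zero_left (l : ℤ) : P z 0 l = P₀ z l := by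
  rw [P_comm, P_zero_right]

theorem P₀_natAbs (m : ℤ) : P₀ z m = P₀ z m.natAbs := by
  rw [← P_zero_right, ← P_zero_right, P_natAbs, Int.natAbs_zero, Nat.cast_zero]

theorem Q_neg_sub_one_right (m l : ℤ) : Q z m (-l - 1) = -Q z m l := by
  rw [Q, Q, show m + (-l - 1) + 1 = m - l by ring, show m - (-l - 1) = m + l + 1 by ring,
    G_two_comm, neg_one_zpow_eq_neg_of_odd_sub (a := m + (-l - 1)) (b := m + l) ⟨-l - 1, by ring⟩,
    neg_mul]

theorem Q_neg_sub_one_left (m l : ℤ) : Q z (-m - 1) l = -Q z m l := by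
  rw [Q, Q, show -m - 1 + l + 1 = -(m - l) by ring, show -m - 1 - l = -(m + l + 1) by ring,
    G_two_neg_left, G_two_neg_right, G_two_comm,
    neg_one_zpow_eq_neg_of_odd_sub (a := -m - 1 + l) (b := m + l) ⟨-m - 1, by ring⟩, neg_mul]

end Symmetries

section Telescoping

open Finset

variable {M : Type*} [AddCommGroup M]

theorem sum_Icc_sub_sub_one (f : ℤ → M) {a b : ℤ} (h : a ≤ b + 1) :
    ∑ i ∈ Icc a b, (f i - f (i - 1)) = f b - f (a - 1) := by
  induction b, (by omega : a - 1 ≤ b) using Int.leInduction with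
  | base => simp
  | succ b hb ih =>
    rw [← insert_Icc_right_eq_Icc_add_one (by omega), sum_insert (by simp), ih (by omega),
      add_sub_cancel_right]
    abel

theorem sum_Icc_sum_Icc_mixed_diff (f : ℤ → ℤ → M) {a b c e : ℤ} (hab : a ≤ b + 1)
    (hce : c ≤ e + 1) :
    ∑ μ ∈ Icc a b, ∑ ν ∈ Icc c e, (f μ ν - f (μ - 1) ν - f μ (ν - 1) + f (μ - 1) (ν - 1)) =
      f b e - f (a - 1) e - f b (c - 1) + f (a - 1) (c - 1) := by
  calc _ = ∑ μ ∈ Icc a b, ∑ ν ∈ Icc c e,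
        ((f μ ν - f (μ - 1) ν) - (f μ (ν - 1) - f (μ - 1) (ν - 1))) :=
        sum_congr rfl fun μ _ => sum_congr rfl fun ν _ => by abel
    _ = ∑ μ ∈ Icc a b, ((f μ e - f (μ - 1) e) - (f μ (c - 1) - f (μ - 1) (c - 1))) :=
        sum_congr rfl fun μ _ => sum_Icc_sub_sub_one (fun ν => f μ ν - f (μ - 1) ν) hce
    _ = ∑ μ ∈ Icc a b, ((f μ e - f μ (c - 1)) - (f (μ - 1) e - f (μ - 1) (c - 1))) :=
        sum_congr rfl fun μ _ => by abel
    _ = (f b e - f b (c - 1)) - (f (a - 1) e - f (a - 1) (c - 1)) :=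
        sum_Icc_sub_sub_one (fun μ => f μ e - f μ (c - 1)) hab
    _ = _ := by abel

theorem sum_range_sum_range_mixed_diff (f : ℕ → ℕ → M) (m l : ℕ) :
    ∑ i ∈ range m, ∑ j ∈ range l, (f (i + 1) (j + 1) - f (i + 1) j - f i (j + 1) + f i j) =
      f m l - f m 0 - f 0 l + f 0 0 := by
  calc _ = ∑ i ∈ range m, ∑ j ∈ range l,
        ((f (i + 1) (j + 1) - f i (j + 1)) - (f (i + 1) j - f i j)) :=
        sum_congr rfl fun i _ => sum_congr rfl fun j _ => by abel
    _ = ∑ i ∈ range m, ((f (i + 1) l - f i l) - (f (i + 1) 0 - f i 0)) :=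
        sum_congr rfl fun i _ => sum_range_sub (fun j => f (i + 1) j - f i j) l
    _ = ∑ i ∈ range m, ((f (i + 1) l - f (i + 1) 0) - (f i l - f i 0)) :=
        sum_congr rfl fun i _ => by abel
    _ = (f m l - f m 0) - (f 0 l - f 0 0) := sum_range_sub (fun i => f i l - f i 0) m
    _ = _ := by abel

end Telescoping

section Counting

open Finset

variable {R : Type*} [Ring R]

theorem sum_range_sum_Icc_neg (f : ℤ → R) (m : ℕ) :
    ∑ k ∈ range m, ∑ μ ∈ Icc (-(k : ℤ)) k, f μ =
      ∑ μ ∈ Icc (-(m : ℤ)) m, ((m : R) - μ.natAbs) * f μ := by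
  induction m with
  | zero => simp
  | succ m ih =>
    have hsub : Icc (-(m : ℤ)) m ⊆ Icc (-((m + 1 : ℕ) : ℤ)) (m + 1 : ℕ) :=
      Icc_subset_Icc (by omega) (by omega)
    rw [sum_range_succ, ih, ← sum_subset hsub, ← sum_add_distrib]
    · refine sum_congr rfl fun μ _ => ?_
      push_cast
      rw [add_sub_right_comm, add_one_mul]
    · intro μ hμ hμ'
      simp only [mem_Icc] at hμ hμ'
      rw [show μ.natAbs = m + 1 by omega]
      simp

theorem sum_range_sum_range_sum_Icc_sum_Icc (f : ℤ → ℤ → R) (m l : ℕ) :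
    ∑ i ∈ range m, ∑ j ∈ range l, ∑ μ ∈ Icc (-(i : ℤ)) i, ∑ ν ∈ Icc (-(j : ℤ)) j, f μ ν =
      ∑ μ ∈ Icc (-(m : ℤ)) m, ∑ ν ∈ Icc (-(l : ℤ)) l,
        ((m : R) - μ.natAbs) * ((l : R) - ν.natAbs) * f μ ν := by
  calc _ = ∑ i ∈ range m, ∑ μ ∈ Icc (-(i : ℤ)) i, ∑ ν ∈ Icc (-(l : ℤ)) l,
        ((l : R) - ν.natAbs) * f μ ν := by
        refine sum_congr rfl fun i _ => ?_
        rw [sum_comm]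
        exact sum_congr rfl fun μ _ => sum_range_sum_Icc_neg (f μ) l
    _ = _ := by
        rw [sum_range_sum_Icc_neg]
        simp_rw [mul_sum, mul_assoc]

end Counting

section Recurrence

open Finset

variable {z : ℂ}

theorem Q_natCast_eq (hz : ∀ x : ℝ, 0 ≤ x → x ≤ 8 → z ≠ x) (m l : ℕ) :
    Q z m l = -(1 / 4) - (z - 4) / 4 *
      ∑ μ ∈ Icc (-(m : ℤ)) m, ∑ ν ∈ Icc (-(l : ℤ)) l, P z μ ν := by
  have hδ : ∑ μ ∈ Icc (-(m : ℤ)) m, ∑ ν ∈ Icc (-(l : ℤ)) l,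
      (if μ = 0 ∧ ν = 0 then (1 : ℂ) else 0) = 1 := by
    simp [ite_and]
  have htel : ∑ μ ∈ Icc (-(m : ℤ)) m, ∑ ν ∈ Icc (-(l : ℤ)) l,
      (Q z μ ν - Q z (μ - 1) ν - Q z μ (ν - 1) + Q z (μ - 1) (ν - 1)) = 4 * Q z m l := by
    rw [sum_Icc_sum_Icc_mixed_diff (Q z) (by omega) (by omega)]
    simp only [Q_neg_sub_one_left, Q_neg_sub_one_right]
    ring
  have hsum : (4 - z) * ∑ μ ∈ Icc (-(m : ℤ)) m, ∑ ν ∈ Icc (-(l : ℤ)) l, P z μ ν =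
      1 + 4 * Q z m l := by
    simp_rw [mul_sum, P_lattice hz]
    rw [sum_congr rfl fun μ _ => sum_add_distrib, sum_add_distrib, hδ, htel]
  linear_combination -hsum / 4

theorem P_natCast_eq (hz : ∀ x : ℝ, 0 ≤ x → x ≤ 8 → z ≠ x) (m l : ℕ) :
    P z m l = 1 / 4 * (m : ℂ) * (l : ℂ) * (z - 4) - P₀ z 0 + P₀ z m + P₀ z l
      + (z - 4) ^ 2 / 4 * ∑ μ ∈ Icc (-(m : ℤ)) m, ∑ ν ∈ Icc (-(l : ℤ)) l,
        ((m : ℂ) - μ.natAbs) * ((l : ℂ) - ν.natAbs) * P z μ ν := by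
  have hstep (i j : ℕ) : P z (i + 1 : ℕ) (j + 1 : ℕ) - P z (i + 1 : ℕ) j - P z i (j + 1 : ℕ)
      + P z i j = (z - 4) / 4 + (z - 4) ^ 2 / 4 *
        ∑ μ ∈ Icc (-(i : ℤ)) i, ∑ ν ∈ Icc (-(j : ℤ)) j, P z μ ν := by
    push_cast
    rw [← Q_lattice hz, Q_natCast_eq hz]
    ring
  have htel := sum_range_sum_range_mixed_diff (fun i j : ℕ => P z i j) m l
  simp only [hstep, sum_add_distrib, sum_const, card_range, nsmul_eq_mul, ← mul_sum,
    sum_range_sum_range_sum_Icc_sum_Icc] at htel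
  simp only [Nat.cast_zero, P_zero_left, P_zero_right] at htel
  linear_combination -htel

end Recurrence

/-- Recurrence relations for `𝒫` and `𝒬`. -/
theorem P_Q_recurrence (z : ℂ) (hz : ∀ x : ℝ, 0 ≤ x → x ≤ 8 → z ≠ (x : ℂ)) :
    (∀ m l : ℤ,
      P z m l =
        1 / 4 * (m.natAbs : ℂ) * (l.natAbs : ℂ) * (z - 4)
        - P₀ z 0 + P₀ z m + P₀ z l
        + (z - 4) ^ 2 / 4 *
            ∑ μ ∈ Finset.Icc (-(m.natAbs : ℤ)) (m.natAbs : ℤ),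
              ∑ ν ∈ Finset.Icc (-(l.natAbs : ℤ)) (l.natAbs : ℤ),
                ((m.natAbs : ℂ) - (μ.natAbs : ℂ)) * ((l.natAbs : ℂ) - (ν.natAbs : ℂ)) *
                  P z μ ν) ∧
    (∀ m l : ℕ,
      Q z m l =
        -(1 / 4) - (z - 4) / 4 *
          ∑ μ ∈ Finset.Icc (-(m : ℤ)) (m : ℤ),
            ∑ ν ∈ Finset.Icc (-(l : ℤ)) (l : ℤ), P z μ ν) := by
  refine ⟨fun m l => ?_, Q_natCast_eq hz⟩
  rw [P_natAbs z m l, P₀_natAbs z m, P₀_natAbs z l]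
  exact P_natCast_eq hz m.natAbs l.natAbs
end

section
/- Fix c ∈ ℂ and define the operator 𝒯 on functions F : ℤ² → ℂ by (𝒯F)(m,l) := (c²/4)·Σ_{μ=−|m|}^{|m|} Σ_{ν=−|l|}^{|l|} (|m|−|μ|)(|l|−|ν|)·F(μ,ν). Then for every k ∈ ℕ (k ≥ 1), every F : ℤ² → ℂ and every (m,l) ∈ ℤ²: (𝒯^k F)(m,l) = (c^{2k} / (4·((2k−1)!)²))·Σ_{μ=−|m|}^{|m|} Σ_{ν=−|l|}^{|l|} (|m|−|μ|−k+1)_{2k−1} · (|l|−|ν|−k+1)_{2k−1} · F(μ,ν). In particular, for each fixed (m,l) one has (𝒯^k F)(m,l) = 0 for all sufficiently large k. -/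
/-- The Pochhammer symbol `(q)_k = q (q+1) ⋯ (q+k-1)` on `ℂ`. -/
noncomputable def poch (q : ℂ) (k : ℕ) : ℂ := ∏ j ∈ Finset.range k, (q + j)

/-- The operator `𝒯` on functions `F : ℤ² → ℂ`:
`(𝒯F)(m,l) = (c²/4) Σ_{|μ|≤|m|} Σ_{|ν|≤|l|} (|m|-|μ|)(|l|-|ν|) F(μ,ν)`. -/
noncomputable def T (c : ℂ) (F : ℤ × ℤ → ℂ) : ℤ × ℤ → ℂ := fun p =>
  c ^ 2 / 4 *
    ∑ μ ∈ Finset.Icc (-(p.1.natAbs : ℤ)) (p.1.natAbs : ℤ),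
      ∑ ν ∈ Finset.Icc (-(p.2.natAbs : ℤ)) (p.2.natAbs : ℤ),
        ((p.1.natAbs : ℂ) - (μ.natAbs : ℂ)) * ((p.2.natAbs : ℂ) - (ν.natAbs : ℂ)) * F (μ, ν)

/-!
Every iterate `𝒯^k` acts through a kernel of product form `K_k(m, μ) K_k(l, ν)`, with
`K_k(m, μ) = (c^k / 2) · C(|m| - |μ| + k - 1, 2k - 1)` depending only on the depth `|m| - |μ|`
and vanishing for `|μ| ≥ |m|`. Because of this support condition the kernel of
`𝒯^(k+1) = 𝒯^k ∘ 𝒯` is `Σ_μ K_k(m, μ) K_1(μ, μ')`; pairing `μ` with `-μ` turns this into a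
convolution of depth profiles, and the double hockey-stick identity
`Σ_{i+j=N} i · C(j+n, 2n+1) = C(N+n+1, 2n+3)` reproduces the profile for `k + 1`.
The Pochhammer symbol of the statement is `(2k - 1)!` times that binomial coefficient, which
vanishes once `k > |m|`.
-/

open Finset

namespace Nat

theorem sum_range_choose_sub_add {n q : ℕ} (hnq : n ≤ q) (a : ℕ) :
    ∑ s ∈ range (a + 1), (a - s + n).choose q = (a + n + 1).choose (q + 1) := by
  induction a with
  | zero =>
    obtain rfl | hlt := hnq.eq_or_lt
    · simp
    · simp [choose_eq_zero_of_lt hlt, choose_eq_zero_of_lt (show n + 1 < q + 1 by omega)]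
  | succ a ih =>
    rw [sum_range_succ', Nat.sub_zero, add_right_comm a 1 n, choose_succ_succ' (a + n + 1)]
    simp only [Nat.add_sub_add_right, ih]
    ring

theorem sum_range_choose_sub_add_mul {n q : ℕ} (hnq : n ≤ q) (a : ℕ) :
    ∑ s ∈ range (a + 1), (a - s + n).choose q * s = (a + n + 1).choose (q + 2) := by
  induction a with
  | zero => simp [choose_eq_zero_of_lt (show n + 1 < q + 2 by omega)]
  | succ a ih =>
    rw [sum_range_succ']
    simp only [Nat.add_sub_add_right, mul_add, mul_one, sum_add_distrib, ih,
      sum_range_choose_sub_add hnq, mul_zero, add_zero]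
    rw [add_right_comm a 1 n, choose_succ_succ' (a + n + 1) (q + 1)]
    ring

theorem sum_range_choose_sub_add_mul_sub {n q : ℕ} (hnq : n ≤ q) (a b : ℕ) :
    ∑ s ∈ range (a + 1), (a - s + n).choose q * (s - b) = (a - b + n + 1).choose (q + 2) := by
  induction b generalizing a with
  | zero => simpa using sum_range_choose_sub_add_mul hnq a
  | succ b ih =>
    cases a with
    | zero => simp [choose_eq_zero_of_lt (show n + 1 < q + 2 by omega)]
    | succ a =>
      rw [sum_range_succ']
      simp only [Nat.add_sub_add_right, ih, Nat.zero_sub, mul_zero, add_zero]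

end Nat

theorem sum_Icc_neg_natAbs_add {M : Type*} [AddCommMonoid M] (g : ℕ → M) (a : ℕ) :
    ∑ y ∈ Icc (-(a : ℤ)) a, g y.natAbs + g 0 = 2 • ∑ s ∈ range (a + 1), g s := by
  induction a with
  | zero => simp [two_smul]
  | succ a ih =>
    have hIcc : Icc (-((a + 1 : ℕ) : ℤ)) ((a + 1 : ℕ) : ℤ)
        = insert ((a + 1 : ℕ) : ℤ) (insert (-((a + 1 : ℕ) : ℤ)) (Icc (-(a : ℤ)) a)) := by
      ext y
      simp only [mem_Icc, mem_insert]
      omega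
    rw [hIcc, sum_insert (by simp only [mem_Icc, mem_insert]; omega),
      sum_insert (by simp only [mem_Icc]; omega), sum_range_succ, smul_add, ← ih,
      Int.natAbs_neg, Int.natAbs_natCast, two_smul]
    abel

theorem sum_Icc_choose_natAbs_mul_sub {n q : ℕ} (hnq : n ≤ q) (a b : ℕ) :
    ∑ y ∈ Icc (-(a : ℤ)) a, (a - y.natAbs + n).choose q * (y.natAbs - b)
      = 2 * (a - b + n + 1).choose (q + 2) := by
  have h := sum_Icc_neg_natAbs_add (fun s => (a - s + n).choose q * (s - b)) a
  simp only [Nat.zero_sub, mul_zero, add_zero, smul_eq_mul] at h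
  rw [h, Nat.sum_range_choose_sub_add_mul_sub hnq]

theorem sum_Icc_neg_eq_of_le {M : Type*} [AddCommMonoid M] {a b : ℕ} (hab : a ≤ b)
    (f : ℤ → M) (hf : ∀ y : ℤ, a < y.natAbs → f y = 0) :
    ∑ y ∈ Icc (-(a : ℤ)) a, f y = ∑ y ∈ Icc (-(b : ℤ)) b, f y :=
  sum_subset (fun y => by simp only [mem_Icc]; omega) fun y _ hy =>
    hf y (by simp only [mem_Icc] at hy; omega)

noncomputable def kernelOp (K : ℤ → ℤ → ℂ) (F : ℤ × ℤ → ℂ) : ℤ × ℤ → ℂ := fun p =>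
  ∑ μ ∈ Icc (-(p.1.natAbs : ℤ)) p.1.natAbs, ∑ ν ∈ Icc (-(p.2.natAbs : ℤ)) p.2.natAbs,
    K p.1 μ * K p.2 ν * F (μ, ν)

section kernelOp

variable {K : ℤ → ℤ → ℂ}

theorem kernelOp_apply_eq_sum_Icc (hK : ∀ y z : ℤ, y.natAbs < z.natAbs → K y z = 0)
    (F : ℤ × ℤ → ℂ) {μ ν : ℤ} {a b : ℕ} (hμ : μ.natAbs ≤ a) (hν : ν.natAbs ≤ b) :
    kernelOp K F (μ, ν) = ∑ μ' ∈ Icc (-(a : ℤ)) a, ∑ ν' ∈ Icc (-(b : ℤ)) b,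
      K μ μ' * K ν ν' * F (μ', ν') := by
  rw [kernelOp, sum_Icc_neg_eq_of_le hμ _ fun μ' h => by simp [hK μ μ' h]]
  exact sum_congr rfl fun μ' _ => sum_Icc_neg_eq_of_le hν _ fun ν' h => by simp [hK ν ν' h]

theorem kernelOp_kernelOp (L : ℤ → ℤ → ℂ) (hL : ∀ y z : ℤ, y.natAbs < z.natAbs → L y z = 0)
    (F : ℤ × ℤ → ℂ) :
    kernelOp K (kernelOp L F)
      = kernelOp (fun x z => ∑ y ∈ Icc (-(x.natAbs : ℤ)) x.natAbs, K x y * L y z) F := by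
  funext ⟨m, l⟩
  calc kernelOp K (kernelOp L F) (m, l)
      = ∑ μ ∈ Icc (-(m.natAbs : ℤ)) m.natAbs, ∑ ν ∈ Icc (-(l.natAbs : ℤ)) l.natAbs,
          ∑ μ' ∈ Icc (-(m.natAbs : ℤ)) m.natAbs, ∑ ν' ∈ Icc (-(l.natAbs : ℤ)) l.natAbs,
            K m μ * K l ν * (L μ μ' * L ν ν' * F (μ', ν')) := by
        refine sum_congr rfl fun μ hμ => sum_congr rfl fun ν hν => ?_
        rw [mem_Icc] at hμ hν
        rw [kernelOp_apply_eq_sum_Icc hL F (a := m.natAbs) (b := l.natAbs) (by omega) (by omega)]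
        simp only [mul_sum]
    _ = _ := by
        simp only [kernelOp, sum_mul_sum]
        simp only [sum_mul]
        simp only [← sum_product' (s := Icc (-(m.natAbs : ℤ)) m.natAbs)
          (t := Icc (-(l.natAbs : ℤ)) l.natAbs)]
        rw [sum_comm]
        exact sum_congr rfl fun _ _ => sum_congr rfl fun _ _ => by ring

end kernelOp

/-- Vanishes for `|y| ≥ |x|` (as `n < 2n + 1`), which makes the truncated subtraction harmless. -/
noncomputable def iterKernel (c : ℂ) (n : ℕ) (x y : ℤ) : ℂ :=
  c ^ (n + 1) / 2 * ((x.natAbs - y.natAbs + n).choose (2 * n + 1) : ℂ)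

theorem iterKernel_eq_zero (c : ℂ) {n : ℕ} {x y : ℤ} (h : x.natAbs < y.natAbs + n + 1) :
    iterKernel c n x y = 0 := by
  simp [iterKernel, Nat.choose_eq_zero_of_lt (show x.natAbs - y.natAbs + n < 2 * n + 1 by omega)]

theorem T_eq_kernelOp (c : ℂ) : T c = kernelOp (iterKernel c 0) := by
  funext F ⟨m, l⟩
  simp only [T, kernelOp, mul_sum]
  refine sum_congr rfl fun μ hμ => sum_congr rfl fun ν hν => ?_
  rw [mem_Icc] at hμ hν
  simp only [iterKernel, Nat.mul_zero, zero_add, add_zero, Nat.choose_one_right, pow_one]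
  rw [Nat.cast_sub (show μ.natAbs ≤ m.natAbs by omega),
    Nat.cast_sub (show ν.natAbs ≤ l.natAbs by omega)]
  ring

theorem sum_iterKernel_mul_iterKernel_zero (c : ℂ) (n : ℕ) (x z : ℤ) :
    ∑ y ∈ Icc (-(x.natAbs : ℤ)) x.natAbs, iterKernel c n x y * iterKernel c 0 y z
      = iterKernel c (n + 1) x z := by
  have h := congrArg (Nat.cast (R := ℂ))
    (sum_Icc_choose_natAbs_mul_sub (show n ≤ 2 * n + 1 by omega) x.natAbs z.natAbs)
  simp only [Nat.cast_sum, Nat.cast_mul, Nat.cast_ofNat] at h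
  simp only [iterKernel, Nat.mul_zero, zero_add, add_zero, Nat.choose_one_right, pow_one]
  rw [show 2 * (n + 1) + 1 = 2 * n + 1 + 2 by ring, ← add_assoc]
  convert congrArg (c ^ (n + 1) / 2 * (c / 2) * ·) h using 1
  · rw [mul_sum]
    exact sum_congr rfl fun _ _ => by ring
  · ring

theorem iterate_T (c : ℂ) (n : ℕ) : (T c)^[n + 1] = kernelOp (iterKernel c n) := by
  induction n with
  | zero => rw [Function.iterate_one, T_eq_kernelOp]
  | succ n ih =>
    funext F
    rw [Function.iterate_succ_apply, ih, T_eq_kernelOp,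
      kernelOp_kernelOp _ fun y z h => iterKernel_eq_zero c (by omega)]
    simp only [sum_iterKernel_mul_iterKernel_zero]

theorem poch_eq_ascPochhammer_eval (x : ℂ) (k : ℕ) : poch x k = (ascPochhammer ℂ k).eval x := by
  induction k with
  | zero => simp [poch]
  | succ k ih => rw [poch, prod_range_succ, ← poch, ih, ascPochhammer_succ_eval]

theorem poch_natCast_sub_add_one (N k : ℕ) :
    poch ((N : ℂ) - k + 1) k = k.factorial * N.choose k := by
  rw [poch_eq_ascPochhammer_eval, ← descPochhammer_eval_eq_ascPochhammer,
    descPochhammer_eval_eq_descFactorial, Nat.descFactorial_eq_factorial_mul_choose, Nat.cast_mul]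

theorem poch_natAbs_sub_natAbs (n : ℕ) {x y : ℤ} (h : y.natAbs ≤ x.natAbs) :
    poch ((x.natAbs : ℂ) - y.natAbs - ((n + 1 : ℕ) : ℂ) + 1) (2 * (n + 1) - 1)
      = (2 * n + 1).factorial * (x.natAbs - y.natAbs + n).choose (2 * n + 1) := by
  rw [show 2 * (n + 1) - 1 = 2 * n + 1 by omega, ← poch_natCast_sub_add_one]
  push_cast [Nat.cast_sub h]
  ring_nf

/-- Closed formula for the iterates of `𝒯`, and local nilpotency of `𝒯`. -/
theorem T_iterate_formula (c : ℂ) :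
    (∀ k : ℕ, 1 ≤ k → ∀ F : ℤ × ℤ → ℂ, ∀ m l : ℤ,
      (T c)^[k] F (m, l) =
        c ^ (2 * k) / (4 * ((2 * k - 1).factorial : ℂ) ^ 2) *
          ∑ μ ∈ Finset.Icc (-(m.natAbs : ℤ)) (m.natAbs : ℤ),
            ∑ ν ∈ Finset.Icc (-(l.natAbs : ℤ)) (l.natAbs : ℤ),
              poch ((m.natAbs : ℂ) - (μ.natAbs : ℂ) - k + 1) (2 * k - 1) *
                poch ((l.natAbs : ℂ) - (ν.natAbs : ℂ) - k + 1) (2 * k - 1) * F (μ, ν)) ∧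
    (∀ F : ℤ × ℤ → ℂ, ∀ m l : ℤ, ∃ K : ℕ, ∀ k : ℕ, K ≤ k → (T c)^[k] F (m, l) = 0) := by
  constructor
  · intro k hk F m l
    obtain ⟨n, rfl⟩ := Nat.exists_eq_add_of_le' hk
    rw [iterate_T, kernelOp, mul_sum]
    refine sum_congr rfl fun μ hμ => ?_
    rw [mul_sum]
    refine sum_congr rfl fun ν hν => ?_
    rw [mem_Icc] at hμ hν
    rw [poch_natAbs_sub_natAbs n (by omega), poch_natAbs_sub_natAbs n (by omega),
      show 2 * (n + 1) - 1 = 2 * n + 1 by omega]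
    have hfact : ((2 * n + 1).factorial : ℂ) ≠ 0 := Nat.cast_ne_zero.mpr (Nat.factorial_ne_zero _)
    simp only [iterKernel]
    field_simp
    ring
  · intro F m l
    refine ⟨m.natAbs + 1, fun k hk => ?_⟩
    obtain ⟨n, rfl⟩ := Nat.exists_eq_add_of_le' (show 1 ≤ k by omega)
    rw [iterate_T, kernelOp]
    exact sum_eq_zero fun μ _ => sum_eq_zero fun ν _ => by
      rw [iterKernel_eq_zero c (by omega), zero_mul, zero_mul]
end

section
/- For all k ∈ ℕ₀ and all n = (n₁,n₂) ∈ ℤ² the following two identities hold, where the Pochhammer symbols are evaluated in ℚ: (i) Σ_{α₁+α₂=2k, α₁,α₂ ∈ ℕ₀} ((−1)^{α₁}/(α₁! α₂!))·(1/2+n₁)_{α₁}(1/2−n₁)_{α₁}(1/2+n₂)_{α₂}(1/2−n₂)_{α₂} = (4^{2k}/(2k)!)·((1+n₁+n₂)/2)_k·((1+n₁−n₂)/2)_k·((1−n₁+n₂)/2)_k·((1−n₁−n₂)/2)_k; and (ii) Σ_{α₁+α₂=2k+1, α₁,α₂ ∈ ℕ₀} ((−1)^{α₁}/(α₁! α₂!))·(1/2+n₁)_{α₁}(1/2−n₁)_{α₁}(1/2+n₂)_{α₂}(1/2−n₂)_{α₂}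 = (4^{2k+1}/(2k+1)!)·((n₁+n₂)/2)_{k+1}·((n₁−n₂)/2)_{k+1}·((2−n₁+n₂)/2)_k·((2−n₁−n₂)/2)_k. -/
/-!
With `A_n(x) = ∏_{j<n} ((2j+1)² - x²) = 4ⁿ (1/2 + x/2)_n (1/2 - x/2)_n`, the left-hand side at
`x = 2n₁`, `y = 2n₂` is `S_m(x, y) / (4^m m!)`, where
`S_m(x, y) = ∑_{i+j=m} (-1)^i C(m,i) A_i(x) A_j(y)`.
Two applications of Pascal's rule write `S_{m+2}` as an alternating binomial sum of second
differences, and a Wilf–Zeilberger certificate shows that, up to a telescoping sum, this is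
`((2m+2)² - (x+y)²) ((2m+2)² - (x-y)²) S_m`. From `S_0 = 1` and `S_1 = x² - y²` the recursion gives
closed products, which regroup into the four Pochhammer symbols.
-/

/-- The Pochhammer symbol `(q)_k = q (q+1) ⋯ (q+k-1)` on `ℚ`. -/
def pochQ (q : ℚ) (k : ℕ) : ℚ := ∏ j ∈ Finset.range k, (q + j)

open Finset

section CommRing

variable {R : Type*} [CommRing R]

theorem Finset.Nat.sum_antidiagonal_neg_one_pow_choose_succ (f : ℕ → ℕ → R) (n : ℕ) :
    ∑ p ∈ antidiagonal (n + 1), (-1) ^ p.1 * ((n + 1).choose p.1 : R) * f p.1 p.2 =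
      ∑ p ∈ antidiagonal n,
        (-1) ^ p.1 * (n.choose p.1 : R) * (f p.1 (p.2 + 1) - f (p.1 + 1) p.2) := by
  have h := sum_antidiagonal_choose_succ_mul (fun i j => (-1 : R) ^ i * f i j) n
  simp only [mul_left_comm _ ((-1 : R) ^ _)] at h
  simp only [mul_assoc, mul_sub, sum_sub_distrib]
  rw [h, sub_eq_add_neg, ← sum_neg_distrib]
  congr 1
  refine sum_congr rfl fun p hp => ?_
  rw [Nat.choose_symm_of_eq_add (mem_antidiagonal.mp hp).symm, pow_succ]
  ring

theorem Finset.Nat.sum_antidiagonal_sub_shift {M : Type*} [AddCommGroup M] (f : ℕ → ℕ → M)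
    (n : ℕ) :
    ∑ p ∈ antidiagonal n, (f (p.1 + 1) p.2 - f p.1 (p.2 + 1)) = f (n + 1) 0 - f 0 (n + 1) := by
  have h₁ := Nat.sum_antidiagonal_succ (f := fun p => f p.1 p.2) (n := n)
  have h₂ := Nat.sum_antidiagonal_succ' (f := fun p => f p.1 p.2) (n := n)
  rw [sum_sub_distrib, sub_eq_sub_iff_add_eq_add, add_comm, ← h₁, h₂, add_comm]

def oddSqProd (x : R) (n : ℕ) : R := ∏ j ∈ range n, ((2 * j + 1) ^ 2 - x ^ 2)

theorem oddSqProd_succ (x : R) (n : ℕ) :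
    oddSqProd x (n + 1) = oddSqProd x n * ((2 * n + 1) ^ 2 - x ^ 2) :=
  prod_range_succ _ _

def oddSqConv (x y : R) (m : ℕ) : R :=
  ∑ p ∈ antidiagonal m, (-1) ^ p.1 * (m.choose p.1 : R) * (oddSqProd x p.1 * oddSqProd y p.2)

theorem oddSqConv_add_two (x y : R) (m : ℕ) :
    oddSqConv x y (m + 2) =
      ((2 * m + 2) ^ 2 - (x + y) ^ 2) * ((2 * m + 2) ^ 2 - (x - y) ^ 2) * oddSqConv x y m := by
  set c : R := ((2 * m + 2) ^ 2 - (x + y) ^ 2) * ((2 * m + 2) ^ 2 - (x - y) ^ 2)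
  set G : ℕ → ℕ → R := fun i j => oddSqProd x i * oddSqProd y j
  set H : ℕ → ℕ → R := fun i j => 8 * (2 * m + 3) * ((-1) ^ i * i * (m.choose i : R) * G i j)
  have second_diff : oddSqConv x y (m + 2) =
      ∑ p ∈ antidiagonal m, (-1) ^ p.1 * (m.choose p.1 : R) *
        ((G p.1 (p.2 + 1 + 1) - G (p.1 + 1) (p.2 + 1)) -
          (G (p.1 + 1) (p.2 + 1) - G (p.1 + 1 + 1) p.2)) :=
    (Nat.sum_antidiagonal_neg_one_pow_choose_succ G (m + 1)).trans
      (Nat.sum_antidiagonal_neg_one_pow_choose_succ (fun i j => G i (j + 1) - G (i + 1) j) m)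
  have certificate : ∀ p ∈ antidiagonal m, (-1) ^ p.1 * (m.choose p.1 : R) *
      ((G p.1 (p.2 + 1 + 1) - G (p.1 + 1) (p.2 + 1)) -
        (G (p.1 + 1) (p.2 + 1) - G (p.1 + 1 + 1) p.2)) =
      c * ((-1) ^ p.1 * (m.choose p.1 : R) * G p.1 p.2) + (H (p.1 + 1) p.2 - H p.1 (p.2 + 1)) := by
    rintro ⟨i, j⟩ hij
    obtain rfl : i + j = m := mem_antidiagonal.mp hij
    have hchoose : ((i + j).choose (i + 1) : R) * (i + 1) = (i + j).choose i * j := by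
      have h := Nat.choose_succ_right_eq (i + j) i
      rw [Nat.add_sub_cancel_left] at h
      exact_mod_cast congrArg (Nat.cast : ℕ → R) h
    simp only [c, G, H, oddSqProd_succ]
    push_cast
    linear_combination (8 * (2 * ((i : R) + j) + 3) * (-1) ^ i *
      (oddSqProd x i * ((2 * i + 1) ^ 2 - x ^ 2)) * oddSqProd y j) * hchoose
  rw [second_diff, sum_congr rfl certificate, sum_add_distrib, ← mul_sum,
    Nat.sum_antidiagonal_sub_shift]
  simp [H, oddSqConv, G]

theorem oddSqConv_even (x y : R) (k : ℕ) :
    oddSqConv x y (2 * k) =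
      ∏ j ∈ range k, (((4 * j + 2) ^ 2 - (x + y) ^ 2) * ((4 * j + 2) ^ 2 - (x - y) ^ 2)) := by
  induction k with
  | zero => simp [oddSqConv, oddSqProd]
  | succ k ih =>
    rw [mul_add_one, oddSqConv_add_two, ih, prod_range_succ]
    push_cast
    ring

theorem oddSqConv_odd (x y : R) (k : ℕ) :
    oddSqConv x y (2 * k + 1) = (x ^ 2 - y ^ 2) *
      ∏ j ∈ range k, (((4 * j + 4) ^ 2 - (x + y) ^ 2) * ((4 * j + 4) ^ 2 - (x - y) ^ 2)) := by
  induction k with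
  | zero => simp [oddSqConv, oddSqProd, Nat.sum_antidiagonal_succ]
  | succ k ih =>
    rw [mul_add_one, add_right_comm, oddSqConv_add_two, ih, prod_range_succ]
    push_cast
    ring

end CommRing

theorem oddSqProd_two_mul (a : ℚ) (n : ℕ) :
    oddSqProd (2 * a) n = 4 ^ n * pochQ (1 / 2 + a) n * pochQ (1 / 2 - a) n := by
  rw [oddSqProd, pochQ, pochQ, mul_assoc, ← prod_mul_distrib,
    show (4 : ℚ) ^ n = 4 ^ #(range n) by rw [card_range], pow_card_mul_prod]
  exact prod_congr rfl fun j _ => by ring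

theorem sum_antidiagonal_pochQ_eq_oddSqConv (a b : ℚ) (m : ℕ) :
    ∑ p ∈ antidiagonal m, (-1 : ℚ) ^ p.1 / ((p.1.factorial : ℚ) * (p.2.factorial : ℚ)) *
        pochQ (1 / 2 + a) p.1 * pochQ (1 / 2 - a) p.1 *
        pochQ (1 / 2 + b) p.2 * pochQ (1 / 2 - b) p.2 =
      oddSqConv (2 * a) (2 * b) m / (4 ^ m * m.factorial) := by
  rw [oddSqConv, sum_div]
  refine sum_congr rfl fun ⟨i, j⟩ hij => ?_
  obtain rfl : i + j = m := mem_antidiagonal.mp hij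
  rw [oddSqProd_two_mul, oddSqProd_two_mul, Nat.cast_add_choose, pow_add]
  field_simp

theorem oddSqConv_two_mul_even (a b : ℚ) (k : ℕ) :
    oddSqConv (2 * a) (2 * b) (2 * k) = 16 ^ (2 * k) *
      pochQ ((1 + a + b) / 2) k * pochQ ((1 + a - b) / 2) k *
      pochQ ((1 - a + b) / 2) k * pochQ ((1 - a - b) / 2) k := by
  rw [oddSqConv_even, pochQ, pochQ, pochQ, pochQ, pow_mul,
    show ((16 : ℚ) ^ 2) ^ k = 256 ^ #(range k) by norm_num, pow_card_mul_prod]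
  simp only [mul_assoc, ← prod_mul_distrib]
  exact prod_congr rfl fun j _ => by ring

theorem oddSqConv_two_mul_odd (a b : ℚ) (k : ℕ) :
    oddSqConv (2 * a) (2 * b) (2 * k + 1) = 16 ^ (2 * k + 1) *
      pochQ ((a + b) / 2) (k + 1) * pochQ ((a - b) / 2) (k + 1) *
      pochQ ((2 - a + b) / 2) k * pochQ ((2 - a - b) / 2) k := by
  have hterm : ∀ j ∈ range k,
      ((4 * (j : ℚ) + 4) ^ 2 - (2 * a + 2 * b) ^ 2) * ((4 * j + 4) ^ 2 - (2 * a - 2 * b) ^ 2) =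
        256 * (((a + b) / 2 + ↑(j + 1)) * ((a - b) / 2 + ↑(j + 1)) *
          ((2 - a + b) / 2 + j) * ((2 - a - b) / 2 + j)) := fun j _ => by push_cast; ring
  rw [oddSqConv_odd, prod_congr rfl hterm, pochQ, pochQ, pochQ, pochQ, prod_range_succ',
    prod_range_succ',
    show (16 : ℚ) ^ (2 * k + 1) = 256 ^ k * 16 by rw [pow_succ, pow_mul]; norm_num]
  simp only [prod_mul_distrib, prod_const, card_range]
  push_cast
  ring

/-- Two Pochhammer-symbol identities equivalent to the coincidence of the singular parts
of the resolvent expansions around the embedded threshold. -/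
theorem poch_identities (k : ℕ) (n₁ n₂ : ℤ) :
    (∑ p ∈ Finset.HasAntidiagonal.antidiagonal (2 * k),
        (-1 : ℚ) ^ p.1 / ((p.1.factorial : ℚ) * (p.2.factorial : ℚ)) *
          pochQ (1 / 2 + n₁) p.1 * pochQ (1 / 2 - n₁) p.1 *
          pochQ (1 / 2 + n₂) p.2 * pochQ (1 / 2 - n₂) p.2
      = (4 : ℚ) ^ (2 * k) / ((2 * k).factorial : ℚ) *
          pochQ ((1 + n₁ + n₂) / 2) k * pochQ ((1 + n₁ - n₂) / 2) k *
          pochQ ((1 - n₁ + n₂) / 2) k * pochQ ((1 - n₁ - n₂) / 2) k) ∧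
    (∑ p ∈ Finset.HasAntidiagonal.antidiagonal (2 * k + 1),
        (-1 : ℚ) ^ p.1 / ((p.1.factorial : ℚ) * (p.2.factorial : ℚ)) *
          pochQ (1 / 2 + n₁) p.1 * pochQ (1 / 2 - n₁) p.1 *
          pochQ (1 / 2 + n₂) p.2 * pochQ (1 / 2 - n₂) p.2
      = (4 : ℚ) ^ (2 * k + 1) / ((2 * k + 1).factorial : ℚ) *
          pochQ ((n₁ + n₂) / 2) (k + 1) * pochQ ((n₁ - n₂) / 2) (k + 1) *
          pochQ ((2 - n₁ + n₂) / 2) k * pochQ ((2 - n₁ - n₂) / 2) k) := by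
  have h16 (m : ℕ) : (16 : ℚ) ^ m = 4 ^ m * 4 ^ m := by rw [← mul_pow]; norm_num
  rw [sum_antidiagonal_pochQ_eq_oddSqConv, sum_antidiagonal_pochQ_eq_oddSqConv,
    oddSqConv_two_mul_even, oddSqConv_two_mul_odd, h16, h16]
  constructor <;> field_simp
end
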